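/- arXiv:2004.12099 — 6 statements merged into one kernel-verified Lean document; each statement's English description precedes it below -/
import Mathlib

section
/- (Theorem 1, necessity.) Let m ≥ 2 and n ≥ 1, and let X(0), ..., X(n-1) be random vectors in ℝ^m with components bounded as X_min,i ≤ X_i(k) ≤ X_max,i, X_min,i > -1, X_max,i finite. Define 𝒳_{n,i} := ∏_{k=0}^{n-1} (1 + X_i(k)) - 1 and g_n(K) := (1/n) E[log(1 + K^T 𝒳_n)]. Suppose K* ∈ 𝒦 maximizes g_n over the unit simplex 𝒦 = {K ∈ ℝ^m : K_i ≥ 0 for all i, ∑_{i=1}^m K_i = 1}. Then for each i = 1, ..., m: if K*_i > 0 then E[(1 + 𝒳_{n,i}) / (1 + K*^T 𝒳_n)] = 1, and if K*_i = 0 then E[(1 + 𝒳_{n,i}) / (1 + K*^T 𝒳_n)] ≤ 1. -/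
/-!
For `K` in the simplex the wealth ratio `1 + Kᵀ𝒳ₙ = ∑ⱼ Kⱼ (1 + 𝒳ₙⱼ)` lies in a fixed interval
`[c, C]` with `c > 0`. Moving from `K*` towards the vertex `eᵢ` by `l` turns the wealth
`S = 1 + K*ᵀ𝒳ₙ` into `S + l (T - S)` with `T = 1 + 𝒳ₙᵢ`, and the chord bound
`log y - log x ≥ (y - x) / y` gives `l E[(T - S) / (S + l (T - S))] ≤ 0` by optimality of `K*`.
Letting `l → 0⁺` (dominated convergence) yields `E[T / S] ≤ 1` for every `i`. Since
`∑ᵢ K*ᵢ E[Tᵢ / S] = E[S / S] = 1 = ∑ᵢ K*ᵢ`, equality must hold wherever `K*ᵢ > 0`.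
-/

open MeasureTheory Finset Filter Topology Real

theorem Real.sub_div_le_log_sub_log {x y : ℝ} (hx : 0 < x) (hy : 0 < y) :
    (y - x) / y ≤ log y - log x := by
  have h := one_sub_inv_le_log_of_pos (div_pos hy hx)
  rwa [log_div hy.ne' hx.ne', inv_div, ← div_self hy.ne', ← sub_div] at h

section FirstOrderCondition

variable {Ω : Type*} [MeasurableSpace Ω] {μ : Measure Ω} {S T : Ω → ℝ} {c C : ℝ}

theorem integrable_log_of_mem_Icc [IsFiniteMeasure μ] {f : Ω → ℝ} (hf : AEMeasurable f μ)
    (hc : 0 < c) (hfb : ∀ ω, f ω ∈ Set.Icc c C) : Integrable (fun ω ↦ log (f ω)) μ :=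
  Integrable.of_mem_Icc (log c) (log C) (by fun_prop) <| ae_of_all _ fun ω ↦
    ⟨log_le_log hc (hfb ω).1, log_le_log (hc.trans_le (hfb ω).1) (hfb ω).2⟩

theorem integrable_div_of_mem_Icc [IsFiniteMeasure μ] {f g : Ω → ℝ} (hf : AEMeasurable f μ)
    (hg : AEMeasurable g μ) (hc : 0 < c) (hfb : ∀ ω, f ω ∈ Set.Icc c C)
    (hgb : ∀ ω, g ω ∈ Set.Icc c C) :
    Integrable (fun ω ↦ f ω / g ω) μ :=
  Integrable.of_mem_Icc 0 (C / c) (by fun_prop) <| ae_of_all _ fun ω ↦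
    ⟨div_nonneg (hc.le.trans (hfb ω).1) (hc.le.trans (hgb ω).1),
      div_le_div₀ (hc.le.trans (hfb ω).1 |>.trans (hfb ω).2) (hfb ω).2 hc (hgb ω).1⟩

theorem abs_sub_div_add_mul_sub_le {x y l : ℝ} (hc : 0 < c) (hx : x ∈ Set.Icc c C)
    (hy : y ∈ Set.Icc c C) (hl : l ∈ Set.Icc (0 : ℝ) 1) :
    |(y - x) / (x + l * (y - x))| ≤ C / c := by
  have hden : x + l * (y - x) ∈ Set.Icc c C := (convex_Icc c C).add_smul_sub_mem hx hy hl
  rw [abs_div, abs_of_pos (hc.trans_le hden.1)]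
  refine div_le_div₀ (hc.le.trans hx.1 |>.trans hx.2) ?_ hc hden.1
  obtain ⟨hx₁, hx₂⟩ := hx
  obtain ⟨hy₁, hy₂⟩ := hy
  rw [abs_le]
  constructor <;> linarith

theorem tendsto_integral_sub_div_add_mul_sub [IsFiniteMeasure μ] (hS : AEMeasurable S μ)
    (hT : AEMeasurable T μ) (hc : 0 < c) (hSb : ∀ ω, S ω ∈ Set.Icc c C)
    (hTb : ∀ ω, T ω ∈ Set.Icc c C) :
    Tendsto (fun l ↦ ∫ ω, (T ω - S ω) / (S ω + l * (T ω - S ω)) ∂μ) (𝓝[>] 0)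
      (𝓝 (∫ ω, (T ω - S ω) / S ω ∂μ)) := by
  refine tendsto_integral_filter_of_dominated_convergence (fun _ ↦ C / c)
    (Eventually.of_forall fun l ↦ (by fun_prop : AEMeasurable _ μ).aestronglyMeasurable) ?_
    (integrable_const _) (ae_of_all _ fun ω ↦ ?_)
  · filter_upwards [Ioc_mem_nhdsGT zero_lt_one] with l hl
    exact ae_of_all _ fun ω ↦
      abs_sub_div_add_mul_sub_le hc (hSb ω) (hTb ω) (Set.Ioc_subset_Icc_self hl)
  · have hS0 : S ω + 0 * (T ω - S ω) ≠ 0 := by simpa using (hc.trans_le (hSb ω).1).ne'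
    have hcont : ContinuousAt (fun l ↦ (T ω - S ω) / (S ω + l * (T ω - S ω))) 0 :=
      continuousAt_const.div (by fun_prop) hS0
    simpa using hcont.tendsto.mono_left nhdsWithin_le_nhds

theorem integral_div_le_one_of_integral_log_le [IsProbabilityMeasure μ]
    (hS : AEMeasurable S μ) (hT : AEMeasurable T μ) (hc : 0 < c)
    (hSb : ∀ ω, S ω ∈ Set.Icc c C) (hTb : ∀ ω, T ω ∈ Set.Icc c C)
    (hle : ∀ l ∈ Set.Ioc (0 : ℝ) 1,
      ∫ ω, log (S ω + l * (T ω - S ω)) ∂μ ≤ ∫ ω, log (S ω) ∂μ) :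
    ∫ ω, T ω / S ω ∂μ ≤ 1 := by
  set φ : ℝ → Ω → ℝ := fun l ω ↦ (T ω - S ω) / (S ω + l * (T ω - S ω))
  have hmem : ∀ l ∈ Set.Icc (0 : ℝ) 1, ∀ ω, S ω + l * (T ω - S ω) ∈ Set.Icc c C :=
    fun l hl ω ↦ (convex_Icc c C).add_smul_sub_mem (hSb ω) (hTb ω) hl
  have hφ_int : ∀ l ∈ Set.Icc (0 : ℝ) 1, Integrable (φ l) μ := fun l hl ↦
    Integrable.of_bound (by fun_prop : AEMeasurable _ μ).aestronglyMeasurable (C / c)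
      (ae_of_all _ fun ω ↦ abs_sub_div_add_mul_sub_le hc (hSb ω) (hTb ω) hl)
  have hφ_nonpos : ∀ l ∈ Set.Ioc (0 : ℝ) 1, ∫ ω, φ l ω ∂μ ≤ 0 := by
    intro l hl
    have hl' : l ∈ Set.Icc (0 : ℝ) 1 := Set.Ioc_subset_Icc_self hl
    have hpt : ∀ ω, l * φ l ω ≤ log (S ω + l * (T ω - S ω)) - log (S ω) := fun ω ↦ by
      rw [← mul_div_assoc]
      simpa using Real.sub_div_le_log_sub_log (hc.trans_le (hSb ω).1)
        (hc.trans_le (hmem l hl' ω).1)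
    have hlogS := integrable_log_of_mem_Icc (μ := μ) hS hc hSb
    have hlogl := integrable_log_of_mem_Icc (μ := μ) (by fun_prop) hc (hmem l hl')
    have hint : ∫ ω, l * φ l ω ∂μ ≤
        ∫ ω, (log (S ω + l * (T ω - S ω)) - log (S ω)) ∂μ :=
      integral_mono ((hφ_int l hl').const_mul l) (hlogl.sub hlogS) hpt
    rw [integral_const_mul, integral_sub hlogl hlogS] at hint
    exact nonpos_of_mul_nonpos_right (by linarith [hle l hl]) hl.1
  have h0 : ∫ ω, (T ω - S ω) / S ω ∂μ ≤ 0 :=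
    le_of_tendsto (tendsto_integral_sub_div_add_mul_sub hS hT hc hSb hTb)
      (by filter_upwards [Ioc_mem_nhdsGT zero_lt_one] using hφ_nonpos)
  have hφ0 : ∀ ω, T ω / S ω = (T ω - S ω) / S ω + 1 := fun ω ↦ by
    rw [sub_div, div_self (hc.trans_le (hSb ω).1).ne', sub_add_cancel]
  simp_rw [hφ0]
  rw [integral_add (by simpa [φ] using hφ_int 0 (by simp)) (integrable_const 1)]
  simpa using h0

end FirstOrderCondition

theorem eq_one_of_sum_mul_eq_one {ι : Type*} [Fintype ι] {w E : ι → ℝ}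
    (hw : w ∈ stdSimplex ℝ ι) (hE : ∀ j, E j ≤ 1) (hsum : ∑ j, w j * E j = 1) {i : ι}
    (hi : 0 < w i) : E i = 1 := by
  have hzero : ∑ j, w j * (1 - E j) = 0 := by
    simp only [mul_sub, mul_one, sum_sub_distrib, hsum, hw.2, sub_self]
  have hi0 := (sum_eq_zero_iff_of_nonneg fun j _ ↦ mul_nonneg (hw.1 j) (sub_nonneg.2 (hE j))).1
    hzero i (mem_univ i)
  linarith [(mul_eq_zero.1 hi0).resolve_left hi.ne']

theorem prod_one_add_mem_Icc {ι : Type*} {s : Finset ι} {x : ι → ℝ} {a b : ℝ} (ha : -1 < a)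
    (hx : ∀ k ∈ s, x k ∈ Set.Icc a b) :
    ∏ k ∈ s, (1 + x k) ∈ Set.Icc ((1 + a) ^ s.card) ((1 + b) ^ s.card) := by
  rw [← prod_const, ← prod_const]
  exact ⟨prod_le_prod (fun _ _ ↦ by linarith) fun k hk ↦ by linarith [(hx k hk).1],
    prod_le_prod (fun k hk ↦ by linarith [(hx k hk).1]) fun k hk ↦ by linarith [(hx k hk).2]⟩

section Portfolio

variable {ι Ω : Type*} [Fintype ι] [MeasurableSpace Ω] {μ : Measure Ω} [IsProbabilityMeasure μ]
  {R : ι → Ω → ℝ} {K : ι → ℝ} {c C : ℝ}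

theorem one_add_sum_mul_eq_sum_mul_one_add {r : ι → ℝ} (hK : ∑ j, K j = 1) :
    1 + ∑ j, K j * r j = ∑ j, K j * (1 + r j) := by
  simp only [mul_add, mul_one, sum_add_distrib, hK]

theorem one_add_sum_mul_mem_Icc {r : ι → ℝ} (hK : K ∈ stdSimplex ℝ ι)
    (hr : ∀ j, 1 + r j ∈ Set.Icc c C) : 1 + ∑ j, K j * r j ∈ Set.Icc c C := by
  rw [one_add_sum_mul_eq_sum_mul_one_add hK.2]
  exact (convex_Icc c C).sum_mem (fun j _ ↦ hK.1 j) hK.2 fun j _ ↦ hr j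

theorem one_add_sum_add_smul_single_sub_mul [DecidableEq ι] (i : ι) (l : ℝ) (r : ι → ℝ) :
    1 + ∑ j, (K + l • (Pi.single i 1 - K) : ι → ℝ) j * r j =
      (1 + ∑ j, K j * r j) + l * ((1 + r i) - (1 + ∑ j, K j * r j)) := by
  simp only [Pi.add_apply, Pi.smul_apply, Pi.sub_apply, Pi.single_apply, smul_eq_mul, add_mul,
    mul_assoc, sub_mul, ite_mul, one_mul, zero_mul, sum_add_distrib, ← mul_sum, sum_sub_distrib,
    sum_ite_eq', mem_univ, ↓reduceIte, add_sub_add_left_eq_sub]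
  ring

theorem integral_one_add_div_le_one (hR : ∀ i, AEMeasurable (R i) μ) (hc : 0 < c)
    (hRb : ∀ i ω, 1 + R i ω ∈ Set.Icc c C) (hK : K ∈ stdSimplex ℝ ι)
    (hopt : IsMaxOn (fun K' ↦ ∫ ω, log (1 + ∑ j, K' j * R j ω) ∂μ) (stdSimplex ℝ ι) K) (i : ι) :
    ∫ ω, (1 + R i ω) / (1 + ∑ j, K j * R j ω) ∂μ ≤ 1 := by
  classical
  refine integral_div_le_one_of_integral_log_le (by fun_prop) (by fun_prop) hc
    (fun ω ↦ one_add_sum_mul_mem_Icc hK (hRb · ω)) (hRb i) fun l hl ↦ ?_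
  have hK' : K + l • (Pi.single i 1 - K) ∈ stdSimplex ℝ ι :=
    (convex_stdSimplex ℝ ι).add_smul_sub_mem hK (single_mem_stdSimplex ℝ i)
      (Set.Ioc_subset_Icc_self hl)
  simpa only [one_add_sum_add_smul_single_sub_mul] using isMaxOn_iff.1 hopt _ hK'

theorem sum_mul_integral_one_add_div_eq_one (hR : ∀ i, AEMeasurable (R i) μ) (hc : 0 < c)
    (hRb : ∀ i ω, 1 + R i ω ∈ Set.Icc c C) (hK : K ∈ stdSimplex ℝ ι) :
    ∑ j, K j * ∫ ω, (1 + R j ω) / (1 + ∑ j', K j' * R j' ω) ∂μ = 1 := by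
  have hW : ∀ ω, 1 + ∑ j, K j * R j ω ∈ Set.Icc c C :=
    fun ω ↦ one_add_sum_mul_mem_Icc hK (hRb · ω)
  have hint : ∀ j, Integrable (fun ω ↦ (1 + R j ω) / (1 + ∑ j', K j' * R j' ω)) μ :=
    fun j ↦ integrable_div_of_mem_Icc (by fun_prop) (by fun_prop) hc (hRb j) hW
  simp_rw [← integral_const_mul]
  rw [← integral_finsetSum _ fun j _ ↦ (hint j).const_mul _]
  have hone : ∀ ω, ∑ j, K j * ((1 + R j ω) / (1 + ∑ j', K j' * R j' ω)) = 1 := fun ω ↦ by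
    simp_rw [← mul_div_assoc, ← sum_div, ← one_add_sum_mul_eq_sum_mul_one_add hK.2]
    exact div_self (hc.trans_le (hW ω).1).ne'
  simp [hone]

theorem integral_one_add_div_eq_one_of_pos (hR : ∀ i, AEMeasurable (R i) μ) (hc : 0 < c)
    (hRb : ∀ i ω, 1 + R i ω ∈ Set.Icc c C) (hK : K ∈ stdSimplex ℝ ι)
    (hopt : IsMaxOn (fun K' ↦ ∫ ω, log (1 + ∑ j, K' j * R j ω) ∂μ) (stdSimplex ℝ ι) K) {i : ι}
    (hi : 0 < K i) : ∫ ω, (1 + R i ω) / (1 + ∑ j, K j * R j ω) ∂μ = 1 :=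
  eq_one_of_sum_mul_eq_one hK (integral_one_add_div_le_one hR hc hRb hK hopt)
    (sum_mul_integral_one_add_div_eq_one hR hc hRb hK) hi

end Portfolio

theorem kelly_optimal_necessity_general
    {Ω : Type*} [MeasurableSpace Ω] (μ : Measure Ω) [IsProbabilityMeasure μ]
    (m n : ℕ) (hn : 1 ≤ n)
    (X : ℕ → Ω → Fin m → ℝ) (hmeas : ∀ k, Measurable (X k))
    (Xmin Xmax : Fin m → ℝ)
    (hXmin : ∀ i, -1 < Xmin i)
    (hbd : ∀ k (ω : Ω) (i : Fin m), Xmin i ≤ X k ω i ∧ X k ω i ≤ Xmax i)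
    (Kstar : Fin m → ℝ) (hKstar0 : ∀ i, 0 ≤ Kstar i) (hKstar1 : ∑ i, Kstar i = 1)
    (hopt : ∀ K : Fin m → ℝ, (∀ i, 0 ≤ K i) → ∑ i, K i = 1 →
      (1 / (n : ℝ)) *
          ∫ ω, Real.log
            (1 + ∑ i, K i * ((∏ k ∈ Finset.range n, (1 + X k ω i)) - 1)) ∂μ ≤
        (1 / (n : ℝ)) *
          ∫ ω, Real.log
            (1 + ∑ i, Kstar i * ((∏ k ∈ Finset.range n, (1 + X k ω i)) - 1)) ∂μ) :
    ∀ i : Fin m,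
      (0 < Kstar i →
        ∫ ω, (1 + ((∏ k ∈ Finset.range n, (1 + X k ω i)) - 1)) /
              (1 + ∑ j, Kstar j * ((∏ k ∈ Finset.range n, (1 + X k ω j)) - 1)) ∂μ = 1) ∧
      (Kstar i = 0 →
        ∫ ω, (1 + ((∏ k ∈ Finset.range n, (1 + X k ω i)) - 1)) /
              (1 + ∑ j, Kstar j * ((∏ k ∈ Finset.range n, (1 + X k ω j)) - 1)) ∂μ ≤ 1) := by
  intro i
  have : Nonempty (Fin m) := ⟨i⟩
  obtain ⟨j₀, hj₀⟩ := Finite.exists_min fun j ↦ (1 + Xmin j) ^ n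
  obtain ⟨j₁, hj₁⟩ := Finite.exists_max fun j ↦ (1 + Xmax j) ^ n
  have hRb : ∀ j ω, 1 + ((∏ k ∈ Finset.range n, (1 + X k ω j)) - 1) ∈
      Set.Icc ((1 + Xmin j₀) ^ n) ((1 + Xmax j₁) ^ n) := fun j ω ↦ by
    have h := prod_one_add_mem_Icc (s := range n) (hXmin j) fun k _ ↦ hbd k ω j
    rw [card_range] at h
    rw [add_sub_cancel]
    exact ⟨(hj₀ j).trans h.1, h.2.trans (hj₁ j)⟩
  have hc : 0 < (1 + Xmin j₀) ^ n := pow_pos (by linarith [hXmin j₀]) n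
  have hK : Kstar ∈ stdSimplex ℝ (Fin m) := ⟨hKstar0, hKstar1⟩
  have hmax : IsMaxOn
      (fun K ↦ ∫ ω, Real.log (1 + ∑ i, K i * ((∏ k ∈ Finset.range n, (1 + X k ω i)) - 1)) ∂μ)
      (stdSimplex ℝ (Fin m)) Kstar :=
    fun K hK' ↦ le_of_mul_le_mul_left (hopt K hK'.1 hK'.2) (one_div_pos.2 (Nat.cast_pos.2 hn))
  have hR : ∀ j, AEMeasurable (fun ω ↦ (∏ k ∈ Finset.range n, (1 + X k ω j)) - 1) μ :=
    fun j ↦ by fun_prop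
  exact ⟨integral_one_add_div_eq_one_of_pos hR hc hRb hK hmax,
    fun _ ↦ integral_one_add_div_le_one hR hc hRb hK hmax i⟩

/-- Theorem 1 (necessity): if `K*` maximizes the expected log growth `gₙ` over the unit
simplex, then for each asset `i`: `E[(1 + 𝒳ₙᵢ)/(1 + K*ᵀ 𝒳ₙ)] = 1` whenever `K*ᵢ > 0`, and
`E[(1 + 𝒳ₙᵢ)/(1 + K*ᵀ 𝒳ₙ)] ≤ 1` whenever `K*ᵢ = 0`. -/
theorem kelly_optimal_necessity
    {Ω : Type*} [MeasurableSpace Ω] (μ : Measure Ω) [IsProbabilityMeasure μ]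
    (m n : ℕ) (hm : 2 ≤ m) (hn : 1 ≤ n)
    (X : ℕ → Ω → Fin m → ℝ) (hmeas : ∀ k, Measurable (X k))
    (Xmin Xmax : Fin m → ℝ)
    (hXmin : ∀ i, -1 < Xmin i)
    (hbd : ∀ k (ω : Ω) (i : Fin m), Xmin i ≤ X k ω i ∧ X k ω i ≤ Xmax i)
    (Kstar : Fin m → ℝ) (hKstar0 : ∀ i, 0 ≤ Kstar i) (hKstar1 : ∑ i, Kstar i = 1)
    (hopt : ∀ K : Fin m → ℝ, (∀ i, 0 ≤ K i) → ∑ i, K i = 1 →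
      (1 / (n : ℝ)) *
          ∫ ω, Real.log
            (1 + ∑ i, K i * ((∏ k ∈ Finset.range n, (1 + X k ω i)) - 1)) ∂μ ≤
        (1 / (n : ℝ)) *
          ∫ ω, Real.log
            (1 + ∑ i, Kstar i * ((∏ k ∈ Finset.range n, (1 + X k ω i)) - 1)) ∂μ) :
    ∀ i : Fin m,
      (0 < Kstar i →
        ∫ ω, (1 + ((∏ k ∈ Finset.range n, (1 + X k ω i)) - 1)) /
              (1 + ∑ j, Kstar j * ((∏ k ∈ Finset.range n, (1 + X k ω j)) - 1)) ∂μ = 1) ∧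
      (Kstar i = 0 →
        ∫ ω, (1 + ((∏ k ∈ Finset.range n, (1 + X k ω i)) - 1)) /
              (1 + ∑ j, Kstar j * ((∏ k ∈ Finset.range n, (1 + X k ω j)) - 1)) ∂μ ≤ 1) :=
  kelly_optimal_necessity_general μ m n hn X hmeas Xmin Xmax hXmin hbd Kstar hKstar0 hKstar1 hopt
end

section
/- (Theorem 1, sufficiency.) Let m ≥ 2 and n ≥ 1, and let X(0), ..., X(n-1) be random vectors in ℝ^m with components bounded as X_min,i ≤ X_i(k) ≤ X_max,i, X_min,i > -1, X_max,i finite. Define 𝒳_{n,i} := ∏_{k=0}^{n-1} (1 + X_i(k)) - 1 and g_n(K) := (1/n) E[log(1 + K^T 𝒳_n)]. Suppose K* ∈ 𝒦 = {K ∈ ℝ^m : K_i ≥ 0 for all i, ∑_{i=1}^m K_i = 1} satisfies, for each i = 1, ..., m: E[(1 + 𝒳_{n,i}) / (1 + K*^T 𝒳_n)] = 1 whenever K*_i > 0, and E[(1 + 𝒳_{n,i}) / (1 + K*^T 𝒳_n)] ≤ 1 whenever K*_i = 0. Then K* maximizes g_n over 𝒦. -/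
open MeasureTheory Finset

lemma sum_one_add {m : ℕ} (K : Fin m → ℝ) (hK1 : ∑ i, K i = 1) (v : Fin m → ℝ) :
    1 + ∑ i, K i * (v i - 1) = ∑ i, K i * v i := by
  simp only [mul_sub, mul_one, Finset.sum_sub_distrib, hK1]; ring

lemma integrable_of_bound {Ω : Type*} [MeasurableSpace Ω] (μ : Measure Ω) [IsFiniteMeasure μ]
    (f : Ω → ℝ) (hf : Measurable f) (C : ℝ) (h : ∀ ω, |f ω| ≤ C) : Integrable f μ :=
  (integrable_const C).mono' hf.aestronglyMeasurable (Filter.Eventually.of_forall h)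

lemma kelly_aux {Ω : Type*} [MeasurableSpace Ω] (μ : Measure Ω) [IsProbabilityMeasure μ]
    (m : ℕ) (Y : Ω → Fin m → ℝ) (hY : ∀ i, Measurable fun ω => Y ω i)
    (a b : ℝ) (ha : 0 < a) (hbd : ∀ ω i, a ≤ Y ω i ∧ Y ω i ≤ b)
    (Kstar : Fin m → ℝ) (h0 : ∀ i, 0 ≤ Kstar i) (h1 : ∑ i, Kstar i = 1)
    (hkkt : ∀ i, ∫ ω, Y ω i / (∑ j, Kstar j * Y ω j) ∂μ ≤ 1)
    (K : Fin m → ℝ) (hK0 : ∀ i, 0 ≤ K i) (hK1 : ∑ i, K i = 1) :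
    ∫ ω, Real.log (∑ i, K i * Y ω i) ∂μ ≤ ∫ ω, Real.log (∑ i, Kstar i * Y ω i) ∂μ := by
  set S : Ω → ℝ := fun ω => ∑ j, Kstar j * Y ω j with hSdef
  set T : Ω → ℝ := fun ω => ∑ j, K j * Y ω j with hTdef
  have hSmeas : Measurable S := Finset.measurable_sum _ fun j _ => (hY j).const_mul _
  have hTmeas : Measurable T := Finset.measurable_sum _ fun j _ => (hY j).const_mul _
  have hbound : ∀ (L : Fin m → ℝ), (∀ i, 0 ≤ L i) → ∑ i, L i = 1 →
      ∀ ω, a ≤ ∑ j, L j * Y ω j ∧ (∑ j, L j * Y ω j) ≤ b := by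
    intro L hL0 hL1 ω
    constructor
    · calc a = ∑ j, L j * a := by rw [← Finset.sum_mul, hL1, one_mul]
        _ ≤ ∑ j, L j * Y ω j :=
          Finset.sum_le_sum fun j _ => mul_le_mul_of_nonneg_left (hbd ω j).1 (hL0 j)
    · calc (∑ j, L j * Y ω j) ≤ ∑ j, L j * b :=
          Finset.sum_le_sum fun j _ => mul_le_mul_of_nonneg_left (hbd ω j).2 (hL0 j)
        _ = b := by rw [← Finset.sum_mul, hL1, one_mul]
  have hS := hbound Kstar h0 h1
  have hT := hbound K hK0 hK1
  have hSpos : ∀ ω, 0 < S ω := fun ω => lt_of_lt_of_le ha (hS ω).1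
  have hTpos : ∀ ω, 0 < T ω := fun ω => lt_of_lt_of_le ha (hT ω).1
  -- integrability of logs
  have hlogbd : ∀ (f : Ω → ℝ), (∀ ω, a ≤ f ω ∧ f ω ≤ b) → ∀ ω,
      |Real.log (f ω)| ≤ max |Real.log a| |Real.log b| := by
    intro f hf ω
    have h1' : Real.log a ≤ Real.log (f ω) := Real.log_le_log ha (hf ω).1
    have h2' : Real.log (f ω) ≤ Real.log b :=
      Real.log_le_log (lt_of_lt_of_le ha (hf ω).1) (hf ω).2
    rw [abs_le]
    constructor
    · calc -(max |Real.log a| |Real.log b|) ≤ -|Real.log a| := by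
            simp [le_max_left]
        _ ≤ Real.log a := neg_abs_le _
        _ ≤ _ := h1'
    · exact h2'.trans ((le_abs_self _).trans (le_max_right _ _))
  have hlogS : Integrable (fun ω => Real.log (S ω)) μ :=
    integrable_of_bound μ _ (hSmeas.log) _ (hlogbd S hS)
  have hlogT : Integrable (fun ω => Real.log (T ω)) μ :=
    integrable_of_bound μ _ (hTmeas.log) _ (hlogbd T hT)
  -- integrability of Y i / S
  have hdiv_int : ∀ i, Integrable (fun ω => Y ω i / S ω) μ := by
    intro i
    refine integrable_of_bound μ _ ((hY i).div hSmeas) (b / a) fun ω => ?_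
    have hnn : 0 ≤ Y ω i / S ω := div_nonneg (le_of_lt (lt_of_lt_of_le ha (hbd ω i).1)) (hSpos ω).le
    rw [abs_of_nonneg hnn]
    exact div_le_div₀ (le_trans ha.le (le_trans (hbd ω i).1 (hbd ω i).2)) (hbd ω i).2 ha (hS ω).1
  have hTS'_int : Integrable (fun ω => T ω / S ω) μ := by
    refine integrable_of_bound μ _ (hTmeas.div hSmeas) (b / a) fun ω => ?_
    have hnn : 0 ≤ T ω / S ω := div_nonneg (hTpos ω).le (hSpos ω).le
    rw [abs_of_nonneg hnn]
    exact div_le_div₀ (le_trans ha.le (le_trans (hT ω).1 (hT ω).2)) (hT ω).2 ha (hS ω).1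
  have hTS_int : Integrable (fun ω => T ω / S ω - 1) μ := hTS'_int.sub (integrable_const 1)
  -- pointwise inequality
  have hpt : ∀ ω, Real.log (T ω) - Real.log (S ω) ≤ T ω / S ω - 1 := by
    intro ω
    rw [← Real.log_div (hTpos ω).ne' (hSpos ω).ne']
    exact Real.log_le_sub_one_of_pos (div_pos (hTpos ω) (hSpos ω))
  -- integral of T/S
  have hTSsum : (fun ω => T ω / S ω) = fun ω => ∑ i, K i * (Y ω i / S ω) := by
    funext ω
    rw [hTdef]
    simp only
    rw [Finset.sum_div]
    exact Finset.sum_congr rfl fun i _ => (mul_div_assoc _ _ _)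
  have hTSle : ∫ ω, T ω / S ω ∂μ ≤ 1 := by
    rw [hTSsum]
    rw [integral_finset_sum _ (fun i _ => ((hdiv_int i).const_mul (K i)))]
    calc (∑ i, ∫ ω, K i * (Y ω i / S ω) ∂μ) = ∑ i, K i * ∫ ω, Y ω i / S ω ∂μ := by
          exact Finset.sum_congr rfl fun i _ => integral_const_mul _ _
      _ ≤ ∑ i, K i * 1 :=
          Finset.sum_le_sum fun i _ => mul_le_mul_of_nonneg_left (hkkt i) (hK0 i)
      _ = 1 := by simp [hK1]
  have key : ∫ ω, Real.log (T ω) ∂μ - ∫ ω, Real.log (S ω) ∂μ ≤ 0 := by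
    rw [← integral_sub hlogT hlogS]
    have h2 : ∫ ω, (Real.log (T ω) - Real.log (S ω)) ∂μ ≤ ∫ ω, (T ω / S ω - 1) ∂μ :=
      integral_mono (hlogT.sub hlogS) hTS_int hpt
    have h3 : ∫ ω, (T ω / S ω - 1) ∂μ = (∫ ω, T ω / S ω ∂μ) - 1 := by
      rw [integral_sub hTS'_int (integrable_const 1), integral_const]
      simp
    linarith [hTSle]
  linarith [key]

/-- Theorem 1 (sufficiency): if `K*` in the unit simplex satisfies the KKT-type conditions
`E[(1 + 𝒳ₙᵢ)/(1 + K*ᵀ 𝒳ₙ)] = 1` whenever `K*ᵢ > 0` and `≤ 1` whenever `K*ᵢ = 0`, then `K*`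
maximizes the expected log growth `gₙ` over the unit simplex. -/
theorem kelly_optimal_sufficiency
    {Ω : Type*} [MeasurableSpace Ω] (μ : Measure Ω) [IsProbabilityMeasure μ]
    (m n : ℕ) (hm : 2 ≤ m) (hn : 1 ≤ n)
    (X : ℕ → Ω → Fin m → ℝ) (hmeas : ∀ k, Measurable (X k))
    (Xmin Xmax : Fin m → ℝ)
    (hXmin : ∀ i, -1 < Xmin i)
    (hbd : ∀ k (ω : Ω) (i : Fin m), Xmin i ≤ X k ω i ∧ X k ω i ≤ Xmax i)
    (Kstar : Fin m → ℝ) (hKstar0 : ∀ i, 0 ≤ Kstar i) (hKstar1 : ∑ i, Kstar i = 1)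
    (hkkt : ∀ i : Fin m,
      (0 < Kstar i →
        ∫ ω, (1 + ((∏ k ∈ Finset.range n, (1 + X k ω i)) - 1)) /
              (1 + ∑ j, Kstar j * ((∏ k ∈ Finset.range n, (1 + X k ω j)) - 1)) ∂μ = 1) ∧
      (Kstar i = 0 →
        ∫ ω, (1 + ((∏ k ∈ Finset.range n, (1 + X k ω i)) - 1)) /
              (1 + ∑ j, Kstar j * ((∏ k ∈ Finset.range n, (1 + X k ω j)) - 1)) ∂μ ≤ 1)) :
    ∀ K : Fin m → ℝ, (∀ i, 0 ≤ K i) → ∑ i, K i = 1 →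
      (1 / (n : ℝ)) *
          ∫ ω, Real.log
            (1 + ∑ i, K i * ((∏ k ∈ Finset.range n, (1 + X k ω i)) - 1)) ∂μ ≤
        (1 / (n : ℝ)) *
          ∫ ω, Real.log
            (1 + ∑ i, Kstar i * ((∏ k ∈ Finset.range n, (1 + X k ω i)) - 1)) ∂μ := by
  intro K hK0 hK1
  have hm0 : 0 < m := lt_of_lt_of_le (by norm_num) hm
  haveI : Nonempty (Fin m) := Fin.pos_iff_nonempty.mp hm0
  set Y : Ω → Fin m → ℝ := fun ω i => ∏ k ∈ Finset.range n, (1 + X k ω i) with hYdef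
  have hYmeas : ∀ i, Measurable fun ω => Y ω i := by
    intro i
    exact Finset.measurable_prod _ fun k _ =>
      measurable_const.add ((measurable_pi_apply i).comp (hmeas k))
  -- pointwise bounds on Y
  have hminpos : ∀ i, (0:ℝ) < 1 + Xmin i := fun i => by linarith [hXmin i]
  have hYlow : ∀ ω i, (1 + Xmin i) ^ n ≤ Y ω i := by
    intro ω i
    calc (1 + Xmin i) ^ n = ∏ _k ∈ Finset.range n, (1 + Xmin i) := by
          rw [Finset.prod_const, Finset.card_range]
      _ ≤ Y ω i := Finset.prod_le_prod (fun k _ => (hminpos i).le)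
          (fun k _ => by linarith [(hbd k ω i).1])
  have hYhigh : ∀ ω i, Y ω i ≤ (1 + Xmax i) ^ n := by
    intro ω i
    calc Y ω i ≤ ∏ _k ∈ Finset.range n, (1 + Xmax i) :=
          Finset.prod_le_prod (fun k _ => by linarith [(hbd k ω i).1, hXmin i])
            (fun k _ => by linarith [(hbd k ω i).2])
      _ = (1 + Xmax i) ^ n := by rw [Finset.prod_const, Finset.card_range]
  set a : ℝ := Finset.univ.inf' Finset.univ_nonempty (fun i => (1 + Xmin i) ^ n) with hadef
  set b : ℝ := Finset.univ.sup' Finset.univ_nonempty (fun i => (1 + Xmax i) ^ n) with hbdef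
  have ha : 0 < a := by
    rw [hadef, Finset.lt_inf'_iff]
    exact fun i _ => pow_pos (hminpos i) n
  have hYbd : ∀ ω i, a ≤ Y ω i ∧ Y ω i ≤ b := by
    intro ω i
    exact ⟨le_trans (Finset.inf'_le (fun i => (1 + Xmin i) ^ n) (Finset.mem_univ i)) (hYlow ω i),
      le_trans (hYhigh ω i) (Finset.le_sup' (fun i => (1 + Xmax i) ^ n) (Finset.mem_univ i))⟩
  -- convert KKT conditions
  have hSpos : ∀ ω, 0 < ∑ j, Kstar j * Y ω j := by
    intro ω
    calc (0:ℝ) < a := ha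
      _ = ∑ j, Kstar j * a := by rw [← Finset.sum_mul, hKstar1, one_mul]
      _ ≤ ∑ j, Kstar j * Y ω j :=
        Finset.sum_le_sum fun j _ => mul_le_mul_of_nonneg_left (hYbd ω j).1 (hKstar0 j)
  have hkkt' : ∀ i, ∫ ω, Y ω i / (∑ j, Kstar j * Y ω j) ∂μ ≤ 1 := by
    intro i
    have heq : (fun ω => Y ω i / (∑ j, Kstar j * Y ω j)) =
        fun ω => (1 + (Y ω i - 1)) / (1 + ∑ j, Kstar j * (Y ω j - 1)) := by
      funext ω
      rw [sum_one_add Kstar hKstar1]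
      ring_nf
    rw [heq]
    rcases (hKstar0 i).lt_or_eq with h | h
    · exact le_of_eq ((hkkt i).1 h)
    · exact (hkkt i).2 h.symm
  have main := kelly_aux μ m Y hYmeas a b ha hYbd Kstar hKstar0 hKstar1 hkkt' K hK0 hK1
  have hgoal : ∀ (L : Fin m → ℝ), ∑ i, L i = 1 →
      (∫ ω, Real.log (1 + ∑ i, L i * (Y ω i - 1)) ∂μ) =
      ∫ ω, Real.log (∑ i, L i * Y ω i) ∂μ := by
    intro L hL1
    congr 1
    funext ω
    rw [sum_one_add L hL1]
  calc (1 / (n : ℝ)) * ∫ ω, Real.log (1 + ∑ i, K i * (Y ω i - 1)) ∂μ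
      = (1 / (n : ℝ)) * ∫ ω, Real.log (∑ i, K i * Y ω i) ∂μ := by rw [hgoal K hK1]
    _ ≤ (1 / (n : ℝ)) * ∫ ω, Real.log (∑ i, Kstar i * Y ω i) ∂μ :=
        mul_le_mul_of_nonneg_left main (by positivity)
    _ = (1 / (n : ℝ)) * ∫ ω, Real.log (1 + ∑ i, Kstar i * (Y ω i - 1)) ∂μ := by
        rw [hgoal Kstar hKstar1]
end

section
/- (Extended Dominant Asset Theorem, necessity.) Let m ≥ 2 and n ≥ 1, and let X(0), X(1), ..., X(n-1) be i.i.d. random vectors in ℝ^m with components bounded as X_min,i ≤ X_i(k) ≤ X_max,i, X_min,i > -1, X_max,i finite. Define 𝒳_{n,i} := ∏_{k=0}^{n-1} (1 + X_i(k)) - 1 and g_n(K) := (1/n) E[log(1 + K^T 𝒳_n)]. Fix an asset index j and suppose the standard unit vector K* = e_j maximizes g_n over the unit simplex 𝒦 = {K ∈ ℝ^m : K_i ≥ 0 for all i, ∑_{i=1}^m K_i = 1}. Then for every i, E[(1 + X_i(0)) / (1 + X_j(0))] ≤ 1. -/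
open MeasureTheory ProbabilityTheory Finset

private lemma edan_integrable {Ω : Type*} [MeasurableSpace Ω] (μ : Measure Ω)
    [IsProbabilityMeasure μ] {f : Ω → ℝ} (hf : Measurable f) {a b : ℝ}
    (h : ∀ ω, a ≤ f ω ∧ f ω ≤ b) : Integrable f μ := by
  refine (integrable_const (max |a| |b|)).mono' hf.aestronglyMeasurable
    (Filter.Eventually.of_forall fun ω => ?_)
  rw [Real.norm_eq_abs, abs_le]
  have h1 := (h ω).1; have h2 := (h ω).2
  have ha := neg_abs_le a; have hb := le_abs_self b
  have hma := le_max_left |a| |b|; have hmb := le_max_right |a| |b|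
  constructor <;> linarith

private lemma edan_log_lb {u : ℝ} (hu : -(1/2) ≤ u) : u - 2*u^2 ≤ Real.log (1+u) := by
  have h1 : (0:ℝ) < 1 + u := by linarith
  have h2 : Real.log ((1+u)⁻¹) ≤ (1+u)⁻¹ - 1 := Real.log_le_sub_one_of_pos (by positivity)
  rw [Real.log_inv] at h2
  have h5 : (1+u) * (1+u)⁻¹ = 1 := mul_inv_cancel₀ h1.ne'
  have h6 : 0 ≤ u^2 * (1 + 2*u) := mul_nonneg (sq_nonneg u) (by linarith)
  nlinarith [h2, h5, h6, h1]

set_option maxHeartbeats 1000000 in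
/-- Extended Dominant Asset Theorem (necessity): if the unit vector `e_j` maximizes the
expected log growth `gₙ` over the unit simplex, then asset `j` is dominant, i.e.
`E[(1 + Xᵢ(0))/(1 + Xⱼ(0))] ≤ 1` for every `i`. -/
theorem extended_dominant_asset_necessity
    {Ω : Type*} [MeasurableSpace Ω] (μ : Measure Ω) [IsProbabilityMeasure μ]
    (m n : ℕ) (hm : 2 ≤ m) (hn : 1 ≤ n)
    (X : ℕ → Ω → Fin m → ℝ) (hmeas : ∀ k, Measurable (X k))
    (hindep : iIndepFun X μ)
    (hident : ∀ k, IdentDistrib (X k) (X 0) μ μ)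
    (Xmin Xmax : Fin m → ℝ)
    (hXmin : ∀ i, -1 < Xmin i)
    (hbd : ∀ k (ω : Ω) (i : Fin m), Xmin i ≤ X k ω i ∧ X k ω i ≤ Xmax i)
    (j : Fin m)
    (hopt : ∀ K : Fin m → ℝ, (∀ i, 0 ≤ K i) → ∑ i, K i = 1 →
      (1 / (n : ℝ)) *
          ∫ ω, Real.log
            (1 + ∑ i, K i * ((∏ k ∈ Finset.range n, (1 + X k ω i)) - 1)) ∂μ ≤
        (1 / (n : ℝ)) *
          ∫ ω, Real.log
            (1 + ∑ i, (Pi.single j 1 : Fin m → ℝ) i *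
              ((∏ k ∈ Finset.range n, (1 + X k ω i)) - 1)) ∂μ) :
    ∀ i : Fin m, ∫ ω, (1 + X 0 ω i) / (1 + X 0 ω j) ∂μ ≤ 1 := by
  -- basic positivity facts
  have hXbd : ∀ k ω (i' : Fin m), 0 < 1 + X k ω i' := fun k ω i' => by
    have := (hbd k ω i').1; have := hXmin i'; linarith
  have hΩ : Nonempty Ω := by
    by_contra h
    have h1 : μ Set.univ = 1 := measure_univ
    rw [Set.univ_eq_empty_iff.mpr (not_nonempty_iff.mp h), measure_empty] at h1
    simp at h1
  obtain ⟨ω₀⟩ := hΩ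
  have h1min : ∀ i' : Fin m, (0:ℝ) < 1 + Xmin i' := fun i' => by have := hXmin i'; linarith
  have h1max : ∀ i' : Fin m, (0:ℝ) < 1 + Xmax i' := fun i' =>
    lt_of_lt_of_le (h1min i') (by have := le_trans (hbd 0 ω₀ i').1 (hbd 0 ω₀ i').2; linarith)
  intro i
  by_cases hij : i = j
  · subst hij
    have : (fun ω => (1 + X 0 ω i) / (1 + X 0 ω i)) = fun _ => (1:ℝ) := by
      funext ω; exact div_self (hXbd 0 ω i).ne'
    rw [this]; simp
  -- main case
  set Y : ℕ → Ω → ℝ := fun k ω => (1 + X k ω i) / (1 + X k ω j) with hYdef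
  set ylo : ℝ := (1 + Xmin i) / (1 + Xmax j) with hylodef
  set yhi : ℝ := (1 + Xmax i) / (1 + Xmin j) with hyhidef
  have hylo : 0 < ylo := div_pos (h1min i) (h1max j)
  have hyhi : 0 < yhi := div_pos (h1max i) (h1min j)
  have hYbd : ∀ k ω, ylo ≤ Y k ω ∧ Y k ω ≤ yhi := by
    intro k ω
    have h1 := (hbd k ω i).1; have h2 := (hbd k ω i).2
    have h3 := (hbd k ω j).1; have h4 := (hbd k ω j).2
    refine ⟨div_le_div₀ (hXbd k ω i).le (by linarith) (hXbd k ω j) (by linarith), ?_⟩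
    exact div_le_div₀ (h1max i).le (by linarith) (h1min j) (by linarith)
  have hfmeas : Measurable (fun v : Fin m → ℝ => (1 + v i) / (1 + v j)) :=
    (measurable_const.add (measurable_pi_apply i)).div
      (measurable_const.add (measurable_pi_apply j))
  have hYmeas : ∀ k, Measurable (Y k) := fun k => hfmeas.comp (hmeas k)
  have hYindep : iIndepFun Y μ :=
    hindep.comp (fun _ (v : Fin m → ℝ) => (1 + v i) / (1 + v j)) (fun _ => hfmeas)
  -- product of integrals
  have key : ∀ s : Finset ℕ, ∫ ω, ∏ k ∈ s, Y k ω ∂μ = ∏ k ∈ s, ∫ ω, Y k ω ∂μ := by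
    intro s
    induction s using Finset.induction_on with
    | empty => simp
    | @insert a s ha ih =>
      have hmul := (hYindep.indepFun_finsetProd_of_notMem hYmeas ha).integral_mul_eq_mul_integral
        ((Finset.measurable_prod s fun k _ => hYmeas k).aestronglyMeasurable.congr ?_)
        (hYmeas a).aestronglyMeasurable
      · calc ∫ ω, ∏ k ∈ insert a s, Y k ω ∂μ
            = ∫ ω, ((∏ k ∈ s, Y k) * Y a) ω ∂μ := by
              congr 1; funext ω
              simp [Finset.prod_insert ha, Finset.prod_apply, mul_comm]
          _ = (∫ ω, (∏ k ∈ s, Y k) ω ∂μ) * ∫ ω, Y a ω ∂μ := hmul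
          _ = ∏ k ∈ insert a s, ∫ ω, Y k ω ∂μ := by
              rw [Finset.prod_insert ha, ← ih, mul_comm]
              exact congrArg (fun f => (∫ ω, Y a ω ∂μ) * ∫ ω, f ω ∂μ)
                (funext fun ω => Finset.prod_apply ω s Y)
      · exact Filter.Eventually.of_forall fun ω => (Finset.prod_apply ω s Y).symm
  -- identical distribution
  have hYid : ∀ k, ∫ ω, Y k ω ∂μ = ∫ ω, Y 0 ω ∂μ := fun k =>
    ((hident k).comp hfmeas).integral_eq
  -- the compound ratio R
  set R : Ω → ℝ := fun ω => ∏ k ∈ Finset.range n, Y k ω with hRdef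
  have hRid : ∫ ω, R ω ∂μ = (∫ ω, Y 0 ω ∂μ) ^ n := by
    rw [hRdef]
    rw [key (Finset.range n), Finset.prod_congr rfl (fun k _ => hYid k),
      Finset.prod_const, Finset.card_range]
  have hRmeas : Measurable R := Finset.measurable_prod (Finset.range n) fun k _ => hYmeas k
  have hRbd : ∀ ω, ylo ^ n ≤ R ω ∧ R ω ≤ yhi ^ n := by
    intro ω
    constructor
    · calc ylo ^ n = ∏ _k ∈ Finset.range n, ylo := by
            rw [Finset.prod_const, Finset.card_range]
        _ ≤ R ω := Finset.prod_le_prod (fun k _ => hylo.le) (fun k _ => (hYbd k ω).1)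
    · calc R ω ≤ ∏ _k ∈ Finset.range n, yhi :=
            Finset.prod_le_prod (fun k _ => le_trans hylo.le (hYbd k ω).1)
              (fun k _ => (hYbd k ω).2)
        _ = yhi ^ n := by rw [Finset.prod_const, Finset.card_range]
  have hRpos : ∀ ω, 0 < R ω := fun ω => lt_of_lt_of_le (pow_pos hylo n) (hRbd ω).1
  set C : ℝ := yhi ^ n + 1 with hCdef
  have hC : 0 < C := by positivity
  have hC1 : 1 ≤ C := by nlinarith [pow_pos hyhi n]
  have hRC : ∀ ω, |R ω - 1| ≤ C := by
    intro ω
    rw [abs_le]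
    have := (hRbd ω).2; have := hRpos ω
    constructor <;> nlinarith
  have hRint : Integrable R μ := edan_integrable μ hRmeas
    (fun ω => ⟨(hRbd ω).1, (hRbd ω).2⟩)
  -- positivity of the compound products
  have hPpos : ∀ (i' : Fin m) ω, 0 < ∏ k ∈ Finset.range n, (1 + X k ω i') := fun i' ω =>
    Finset.prod_pos fun k _ => hXbd k ω i'
  have hPmeas : ∀ i' : Fin m, Measurable (fun ω => ∏ k ∈ Finset.range n, (1 + X k ω i')) :=
    fun i' => Finset.measurable_prod (Finset.range n)
      (fun k _ => measurable_const.add ((measurable_pi_apply i').comp (hmeas k)))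
  have hPbd : ∀ (i' : Fin m) ω, (1 + Xmin i') ^ n ≤ (∏ k ∈ Finset.range n, (1 + X k ω i')) ∧
      (∏ k ∈ Finset.range n, (1 + X k ω i')) ≤ (1 + Xmax i') ^ n := by
    intro i' ω
    constructor
    · calc (1 + Xmin i') ^ n = ∏ _k ∈ Finset.range n, (1 + Xmin i') := by
            rw [Finset.prod_const, Finset.card_range]
        _ ≤ _ := Finset.prod_le_prod (fun k _ => (h1min i').le)
            (fun k _ => by have := (hbd k ω i').1; linarith)
    · calc (∏ k ∈ Finset.range n, (1 + X k ω i')) ≤ ∏ _k ∈ Finset.range n, (1 + Xmax i') :=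
            Finset.prod_le_prod (fun k _ => (hXbd k ω i').le)
              (fun k _ => by have := (hbd k ω i').2; linarith)
        _ = (1 + Xmax i') ^ n := by rw [Finset.prod_const, Finset.card_range]
  have hRPP : ∀ ω, R ω = (∏ k ∈ Finset.range n, (1 + X k ω i)) /
      (∏ k ∈ Finset.range n, (1 + X k ω j)) := by
    intro ω
    rw [hRdef, ← Finset.prod_div_distrib]
  -- Step 1 : the variational inequality
  have step1 : ∀ t : ℝ, 0 < t → t ≤ 1 → t * C ≤ 1/2 →
      (∫ ω, R ω ∂μ) - 1 ≤ 2 * t * C ^ 2 := by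
    intro t ht ht1 htC
    set K : Fin m → ℝ := fun i' => (if i' = j then 1 - t else 0) + (if i' = i then t else 0)
      with hKdef
    have hK0 : ∀ i', 0 ≤ K i' := by
      intro i'; rw [hKdef]; dsimp only; split_ifs <;> linarith
    have hK1 : ∑ i', K i' = 1 := by
      rw [hKdef]
      rw [Finset.sum_add_distrib, Finset.sum_ite_eq' Finset.univ j (fun _ => 1 - t),
        Finset.sum_ite_eq' Finset.univ i (fun _ => t)]
      simp
    have h0 := hopt K hK0 hK1
    have e1 : ∀ ω, (1 + ∑ i', K i' * ((∏ k ∈ Finset.range n, (1 + X k ω i')) - 1)) =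
        (1 - t) * (∏ k ∈ Finset.range n, (1 + X k ω j)) +
          t * (∏ k ∈ Finset.range n, (1 + X k ω i)) := by
      intro ω
      rw [hKdef]
      simp only [add_mul, ite_mul, zero_mul, Finset.sum_add_distrib, Finset.sum_ite_eq',
        Finset.mem_univ, if_true]
      ring
    have e2 : ∀ ω, (1 + ∑ i', (Pi.single j 1 : Fin m → ℝ) i' *
        ((∏ k ∈ Finset.range n, (1 + X k ω i')) - 1)) =
        ∏ k ∈ Finset.range n, (1 + X k ω j) := by
      intro ω
      simp only [Pi.single_apply, ite_mul, one_mul, zero_mul, Finset.sum_ite_eq',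
        Finset.mem_univ, if_true]
      ring
    simp_rw [e1, e2] at h0
    have hn0 : (0:ℝ) < 1 / n := by
      have hn' : (0:ℝ) < n := by exact_mod_cast hn
      positivity
    have h0' := le_of_mul_le_mul_left h0 hn0
    have hhalf : ∀ ω, -(1/2) ≤ t * (R ω - 1) ∧ t * (R ω - 1) ≤ 1/2 := by
      intro ω
      have h := abs_le.mp (hRC ω)
      constructor
      · have := mul_nonneg ht.le (show 0 ≤ R ω - 1 + C by linarith [h.1])
        nlinarith
      · have := mul_nonneg ht.le (show 0 ≤ C - (R ω - 1) by linarith [h.2])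
        nlinarith
    have hu1 : ∀ ω, (0:ℝ) < 1 + t * (R ω - 1) := fun ω => by linarith [(hhalf ω).1]
    have e3 : ∀ ω, Real.log ((1 - t) * (∏ k ∈ Finset.range n, (1 + X k ω j)) +
        t * (∏ k ∈ Finset.range n, (1 + X k ω i))) =
        Real.log (∏ k ∈ Finset.range n, (1 + X k ω j)) + Real.log (1 + t * (R ω - 1)) := by
      intro ω
      have hPj := hPpos j ω
      have e : (1 - t) * (∏ k ∈ Finset.range n, (1 + X k ω j)) +
          t * (∏ k ∈ Finset.range n, (1 + X k ω i)) =
          (∏ k ∈ Finset.range n, (1 + X k ω j)) * (1 + t * (R ω - 1)) := by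
        rw [hRPP ω]; field_simp; ring
      rw [e, Real.log_mul hPj.ne' (hu1 ω).ne']
    have hintlogPj : Integrable (fun ω => Real.log (∏ k ∈ Finset.range n, (1 + X k ω j))) μ :=
      edan_integrable μ (Real.measurable_log.comp (hPmeas j)) (fun ω =>
        ⟨Real.log_le_log (pow_pos (h1min j) n) (hPbd j ω).1,
         Real.log_le_log (lt_of_lt_of_le (pow_pos (h1min j) n) (hPbd j ω).1) (hPbd j ω).2⟩)
    have hmeas2 : Measurable (fun ω => Real.log (1 + t * (R ω - 1))) :=
      Real.measurable_log.comp (measurable_const.add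
        (measurable_const.mul (hRmeas.sub measurable_const)))
    have hintlog2 : Integrable (fun ω => Real.log (1 + t * (R ω - 1))) μ :=
      edan_integrable μ hmeas2 (fun ω =>
        ⟨Real.log_le_log (by norm_num) (by linarith [(hhalf ω).1] : (1:ℝ)/2 ≤ 1 + t * (R ω - 1)),
         Real.log_le_log (hu1 ω) (by linarith [(hhalf ω).2] : 1 + t * (R ω - 1) ≤ 2)⟩)
    simp_rw [e3] at h0'
    rw [integral_add hintlogPj hintlog2] at h0'
    have h2 : ∫ ω, Real.log (1 + t * (R ω - 1)) ∂μ ≤ 0 := by linarith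
    have e4 : ∀ ω, t * (R ω - 1) - 2 * (t * (R ω - 1))^2 ≤ Real.log (1 + t * (R ω - 1)) :=
      fun ω => edan_log_lb (hhalf ω).1
    have hintlhs : Integrable (fun ω => t * (R ω - 1) - 2 * (t * (R ω - 1))^2) μ := by
      have hbnd : ∀ ω, (-1:ℝ) ≤ t * (R ω - 1) - 2 * (t * (R ω - 1))^2 ∧
          t * (R ω - 1) - 2 * (t * (R ω - 1))^2 ≤ 1 := by
        intro ω
        have ha := (hhalf ω).1; have hb := (hhalf ω).2
        have hc := sq_nonneg (t * (R ω - 1))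
        constructor <;> nlinarith
      exact edan_integrable μ
        ((measurable_const.mul (hRmeas.sub measurable_const)).sub
          (measurable_const.mul
            ((measurable_const.mul (hRmeas.sub measurable_const)).pow_const 2))) hbnd
    have h3 := integral_mono hintlhs hintlog2 e4
    have i2 : Integrable (fun ω => (R ω - 1)^2) μ := by
      have hbnd2 : ∀ ω, (0:ℝ) ≤ (R ω - 1)^2 ∧ (R ω - 1)^2 ≤ C^2 := by
        intro ω
        have h := abs_le.mp (hRC ω)
        exact ⟨sq_nonneg _, sq_le_sq' (by linarith [h.1]) h.2⟩
      exact edan_integrable μ ((hRmeas.sub measurable_const).pow_const 2) hbnd2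
    have i0 : ∫ ω, (R ω - 1) ∂μ = (∫ ω, R ω ∂μ) - 1 := by
      rw [integral_sub hRint (integrable_const 1)]; simp
    have h4 : ∫ ω, (t * (R ω - 1) - 2 * (t * (R ω - 1))^2) ∂μ
        = t * ((∫ ω, R ω ∂μ) - 1) - (2 * t^2) * ∫ ω, (R ω - 1)^2 ∂μ := by
      calc ∫ ω, (t * (R ω - 1) - 2 * (t * (R ω - 1))^2) ∂μ
          = ∫ ω, (t * (R ω - 1) - (2 * t^2) * (R ω - 1)^2) ∂μ := by
            congr 1; funext ω; ring
        _ = t * (∫ ω, (R ω - 1) ∂μ) - (2 * t^2) * ∫ ω, (R ω - 1)^2 ∂μ := by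
            have i1 : Integrable (fun ω => R ω - 1) μ := hRint.sub (integrable_const 1)
            rw [integral_sub (i1.const_mul t) (i2.const_mul (2 * t^2)),
              integral_const_mul, integral_const_mul]
        _ = _ := by rw [i0]
    have hJC : ∫ ω, (R ω - 1)^2 ∂μ ≤ C^2 := by
      have hh := integral_mono i2 (integrable_const (C^2)) (fun ω => by
        have h := abs_le.mp (hRC ω)
        exact sq_le_sq' (by linarith [h.1]) h.2)
      simpa using hh
    have hJ0 : (0:ℝ) ≤ ∫ ω, (R ω - 1)^2 ∂μ := integral_nonneg fun ω => sq_nonneg _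
    have h5 : t * ((∫ ω, R ω ∂μ) - 1) - (2 * t^2) * ∫ ω, (R ω - 1)^2 ∂μ ≤ 0 := by
      rw [← h4]; linarith
    have h7 : (2 * t^2) * (∫ ω, (R ω - 1)^2 ∂μ) ≤ (2 * t^2) * C^2 :=
      mul_le_mul_of_nonneg_left hJC (by positivity)
    have h6 : t * ((∫ ω, R ω ∂μ) - 1) ≤ t * (2 * t * C^2) := by nlinarith
    exact le_of_mul_le_mul_left h6 ht
  -- conclude ∫ R ≤ 1
  have hIR : ∫ ω, R ω ∂μ ≤ 1 := by
    by_contra hcon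
    push_neg at hcon
    set t : ℝ := min (min 1 (1/(2*C))) (((∫ ω, R ω ∂μ) - 1)/(4*C^2+1)) with htdef
    have ht : 0 < t := lt_min (lt_min one_pos (by positivity))
      (div_pos (by linarith) (by positivity))
    have ht1 : t ≤ 1 := le_trans (min_le_left _ _) (min_le_left _ _)
    have htC : t * C ≤ 1/2 := by
      have h1 : t ≤ 1/(2*C) := le_trans (min_le_left _ _) (min_le_right _ _)
      have h2 : t * C ≤ (1/(2*C)) * C := mul_le_mul_of_nonneg_right h1 hC.le
      have h3 : (1/(2*C)) * C = 1/2 := by field_simp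
      linarith
    have h4 := step1 t ht ht1 htC
    have h5 : t ≤ ((∫ ω, R ω ∂μ) - 1)/(4*C^2+1) := min_le_right _ _
    rw [le_div_iff₀ (by positivity)] at h5
    nlinarith [mul_nonneg ht.le (sq_nonneg C)]
  have hY0 : 0 ≤ ∫ ω, Y 0 ω ∂μ :=
    integral_nonneg fun ω => div_nonneg (hXbd 0 ω i).le (hXbd 0 ω j).le
  rw [hRid] at hIR
  exact (pow_le_one_iff_of_nonneg hY0 (by omega : n ≠ 0)).mp hIR
end

section
/- (Dominant Asset Theorem, sufficiency.) Let m ≥ 2 and n ≥ 1, and let X(0), X(1), ..., X(n-1) be i.i.d. random vectors in ℝ^m with components bounded as X_min,i ≤ X_i(k) ≤ X_max,i, X_min,i > -1, X_max,i finite. Define 𝒳_{n,i} := ∏_{k=0}^{n-1} (1 + X_i(k)) - 1 and g_n(K) := (1/n) E[log(1 + K^T 𝒳_n)]. Fix an asset index j and suppose that for every i ≠ j, E[(1 + X_i(0)) / (1 + X_j(0))] ≤ 1 (asset j is dominant). Then the standard unit vector K* = e_j maximizes g_n over the unit simplex 𝒦 = {K ∈ ℝ^m : K_i ≥ 0 for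 all i, ∑_{i=1}^m K_i = 1}. -/
open MeasureTheory ProbabilityTheory Finset

lemma myIntegrableOfBounds {Ω : Type*} [MeasurableSpace Ω] (μ : Measure Ω)
    [IsFiniteMeasure μ] {f : Ω → ℝ} (hf : Measurable f) {a b : ℝ}
    (h1 : ∀ ω, a ≤ f ω) (h2 : ∀ ω, f ω ≤ b) : Integrable f μ := by
  refine (integrable_const (|a| + |b|)).mono' hf.aestronglyMeasurable (ae_of_all _ fun ω => ?_)
  rw [Real.norm_eq_abs]
  have := h1 ω; have := h2 ω
  have := neg_abs_le a; have := le_abs_self b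
  have := abs_nonneg a; have := abs_nonneg b
  rw [abs_le]; constructor <;> linarith

lemma myIntegralProd {Ω : Type*} [MeasurableSpace Ω] (μ : Measure Ω) [IsProbabilityMeasure μ]
    (f : ℕ → Ω → ℝ) (hindep : iIndepFun f μ)
    (hmeas : ∀ k, Measurable (f k)) (C : ℝ)
    (hf0 : ∀ k ω, 0 ≤ f k ω) (hfC : ∀ k ω, f k ω ≤ C) (n : ℕ) :
    ∫ ω, ∏ k ∈ Finset.range n, f k ω ∂μ = ∏ k ∈ Finset.range n, ∫ ω, f k ω ∂μ := by
  induction n with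
  | zero => simp
  | succ n ih =>
    have hPmeas : Measurable (fun ω => ∏ k ∈ Finset.range n, f k ω) :=
      Finset.measurable_prod _ (fun k _ => hmeas k)
    have hPint : Integrable (fun ω => ∏ k ∈ Finset.range n, f k ω) μ := by
      refine myIntegrableOfBounds μ hPmeas (a := 0) (b := C ^ n) ?_ ?_
      · intro ω; exact Finset.prod_nonneg fun k _ => hf0 k ω
      · intro ω
        calc ∏ k ∈ Finset.range n, f k ω ≤ ∏ _k ∈ Finset.range n, C :=
              Finset.prod_le_prod (fun k _ => hf0 k ω) (fun k _ => hfC k ω)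
          _ = C ^ n := by simp
    have hfint : Integrable (f n) μ :=
      myIntegrableOfBounds μ (hmeas n) (hf0 n) (hfC n)
    have hIndep : IndepFun (∏ k ∈ Finset.range n, f k) (f n) μ :=
      hindep.indepFun_prod_range_succ hmeas n
    have heq : (fun ω => ∏ k ∈ Finset.range (n+1), f k ω)
        = fun ω => (∏ k ∈ Finset.range n, f k) ω * f n ω := by
      funext ω; simp [Finset.prod_range_succ]
    have hPint' : Integrable (∏ k ∈ Finset.range n, f k) μ := by
      rw [Finset.prod_fn]; exact hPint
    have key := hIndep.integral_mul_eq_mul_integral hPint'.aestronglyMeasurable hfint.aestronglyMeasurable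
    rw [heq, Finset.prod_range_succ, ← ih]
    have h2 : (fun ω => (∏ k ∈ Finset.range n, f k) ω * f n ω)
        = (∏ k ∈ Finset.range n, f k) * f n := rfl
    rw [h2, key]
    congr 1
    · simp [Finset.prod_fn]

/-- Dominant Asset Theorem (sufficiency): if asset `j` is dominant, i.e.
`E[(1 + Xᵢ(0))/(1 + Xⱼ(0))] ≤ 1` for every `i ≠ j`, then the unit vector `e_j` maximizes
the expected log growth `gₙ` over the unit simplex. -/
theorem dominant_asset_sufficiency
    {Ω : Type*} [MeasurableSpace Ω] (μ : Measure Ω) [IsProbabilityMeasure μ]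
    (m n : ℕ) (hm : 2 ≤ m) (hn : 1 ≤ n)
    (X : ℕ → Ω → Fin m → ℝ) (hmeas : ∀ k, Measurable (X k))
    (hindep : iIndepFun X μ)
    (hident : ∀ k, IdentDistrib (X k) (X 0) μ μ)
    (Xmin Xmax : Fin m → ℝ)
    (hXmin : ∀ i, -1 < Xmin i)
    (hbd : ∀ k (ω : Ω) (i : Fin m), Xmin i ≤ X k ω i ∧ X k ω i ≤ Xmax i)
    (j : Fin m)
    (hdom : ∀ i : Fin m, i ≠ j → ∫ ω, (1 + X 0 ω i) / (1 + X 0 ω j) ∂μ ≤ 1) :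
    ∀ K : Fin m → ℝ, (∀ i, 0 ≤ K i) → ∑ i, K i = 1 →
      (1 / (n : ℝ)) *
          ∫ ω, Real.log
            (1 + ∑ i, K i * ((∏ k ∈ Finset.range n, (1 + X k ω i)) - 1)) ∂μ ≤
        (1 / (n : ℝ)) *
          ∫ ω, Real.log
            (1 + ∑ i, (Pi.single j 1 : Fin m → ℝ) i *
              ((∏ k ∈ Finset.range n, (1 + X k ω i)) - 1)) ∂μ := by
  intro K hK hKsum
  have hnn : (0:ℝ) ≤ 1 / n := by positivity
  refine mul_le_mul_of_nonneg_left ?_ hnn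
  -- basic positivity facts
  have hApos : ∀ i, (0:ℝ) < 1 + Xmin i := fun i => by linarith [hXmin i]
  have hpos : ∀ k ω i, (0:ℝ) < 1 + X k ω i := fun k ω i => by
    linarith [hApos i, (hbd k ω i).1]
  have hΩ : Nonempty Ω := by
    by_contra h
    rw [not_nonempty_iff] at h
    have h0 : μ Set.univ = 0 := by
      rw [Set.univ_eq_empty_iff.2 h, measure_empty]
    rw [measure_univ] at h0
    exact one_ne_zero h0
  obtain ⟨ω₀⟩ := hΩ
  have hBpos : ∀ i, (0:ℝ) < 1 + Xmax i := fun i => by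
    linarith [hpos 0 ω₀ i, (hbd 0 ω₀ i).2]
  have hle : ∀ k ω i, 1 + X k ω i ≤ 1 + Xmax i := fun k ω i => by
    linarith [(hbd k ω i).2]
  have hge : ∀ k ω i, 1 + Xmin i ≤ 1 + X k ω i := fun k ω i => by
    linarith [(hbd k ω i).1]
  -- products Y
  have hYpos : ∀ ω i, (0:ℝ) < ∏ k ∈ Finset.range n, (1 + X k ω i) := fun ω i =>
    Finset.prod_pos fun k _ => hpos k ω i
  have hYlo : ∀ ω i, (1 + Xmin i) ^ n ≤ ∏ k ∈ Finset.range n, (1 + X k ω i) := by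
    intro ω i
    calc (1 + Xmin i) ^ n = ∏ _k ∈ Finset.range n, (1 + Xmin i) := by simp
      _ ≤ ∏ k ∈ Finset.range n, (1 + X k ω i) :=
          Finset.prod_le_prod (fun k _ => (hApos i).le) (fun k _ => hge k ω i)
  have hYhi : ∀ ω i, ∏ k ∈ Finset.range n, (1 + X k ω i) ≤ (1 + Xmax i) ^ n := by
    intro ω i
    calc ∏ k ∈ Finset.range n, (1 + X k ω i) ≤ ∏ _k ∈ Finset.range n, (1 + Xmax i) :=
          Finset.prod_le_prod (fun k _ => (hpos k ω i).le) (fun k _ => hle k ω i)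
      _ = (1 + Xmax i) ^ n := by simp
  have hYmeas : ∀ i, Measurable (fun ω => ∏ k ∈ Finset.range n, (1 + X k ω i)) := by
    intro i
    exact Finset.measurable_prod _ fun k _ =>
      measurable_const.add ((measurable_pi_apply i).comp (hmeas k))
  -- rewrite the two integrands
  have eL : ∀ ω : Ω, (1 + ∑ i, K i * ((∏ k ∈ Finset.range n, (1 + X k ω i)) - 1))
      = ∑ i, K i * ∏ k ∈ Finset.range n, (1 + X k ω i) := by
    intro ω
    simp only [mul_sub, mul_one, Finset.sum_sub_distrib, hKsum]
    ring
  have eR : ∀ ω : Ω, (1 + ∑ i, (Pi.single j 1 : Fin m → ℝ) i *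
      ((∏ k ∈ Finset.range n, (1 + X k ω i)) - 1))
      = ∏ k ∈ Finset.range n, (1 + X k ω j) := by
    intro ω
    rw [Finset.sum_eq_single j]
    · simp
    · intro i _ hij; simp [Pi.single_eq_of_ne hij]
    · intro h; exact absurd (Finset.mem_univ j) h
  simp only [eL, eR]
  -- notation
  set S : Ω → ℝ := fun ω => ∑ i, K i * ∏ k ∈ Finset.range n, (1 + X k ω i) with hSdef
  set T : Ω → ℝ := fun ω => ∏ k ∈ Finset.range n, (1 + X k ω j) with hTdef
  have hSmeas : Measurable S :=
    Finset.measurable_sum _ fun i _ => (hYmeas i).const_mul (K i)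
  have hTmeas : Measurable T := hYmeas j
  have hTpos : ∀ ω, 0 < T ω := fun ω => hYpos ω j
  have hSlo : ∀ ω, (∑ i, K i * (1 + Xmin i) ^ n) ≤ S ω := fun ω =>
    Finset.sum_le_sum fun i _ => mul_le_mul_of_nonneg_left (hYlo ω i) (hK i)
  have hShi : ∀ ω, S ω ≤ ∑ i, K i * (1 + Xmax i) ^ n := fun ω =>
    Finset.sum_le_sum fun i _ => mul_le_mul_of_nonneg_left (hYhi ω i) (hK i)
  have hs0 : (0:ℝ) < ∑ i, K i * (1 + Xmin i) ^ n := by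
    obtain ⟨i₀, -, hi₀⟩ := Finset.exists_ne_zero_of_sum_ne_zero (by rw [hKsum]; exact one_ne_zero)
    refine Finset.sum_pos' (fun i _ => mul_nonneg (hK i) (pow_nonneg (hApos i).le n)) ?_
    exact ⟨i₀, Finset.mem_univ _, mul_pos (lt_of_le_of_ne (hK i₀) (Ne.symm hi₀))
      (pow_pos (hApos i₀) n)⟩
  have hSpos : ∀ ω, 0 < S ω := fun ω => lt_of_lt_of_le hs0 (hSlo ω)
  have hs1nn : (0:ℝ) ≤ ∑ i, K i * (1 + Xmax i) ^ n :=
    Finset.sum_nonneg fun i _ => mul_nonneg (hK i) (pow_nonneg (hBpos i).le n)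
  -- integrability
  have hlogS : Integrable (fun ω => Real.log (S ω)) μ := by
    refine myIntegrableOfBounds μ (Real.measurable_log.comp hSmeas)
      (a := Real.log (∑ i, K i * (1 + Xmin i) ^ n))
      (b := Real.log (∑ i, K i * (1 + Xmax i) ^ n)) ?_ ?_
    · intro ω; exact Real.log_le_log hs0 (hSlo ω)
    · intro ω; exact Real.log_le_log (hSpos ω) (hShi ω)
  have hlogT : Integrable (fun ω => Real.log (T ω)) μ := by
    refine myIntegrableOfBounds μ (Real.measurable_log.comp hTmeas)
      (a := Real.log ((1 + Xmin j) ^ n)) (b := Real.log ((1 + Xmax j) ^ n)) ?_ ?_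
    · intro ω; exact Real.log_le_log (pow_pos (hApos j) n) (hYlo ω j)
    · intro ω; exact Real.log_le_log (hTpos ω) (hYhi ω j)
  have hratio : Integrable (fun ω => S ω / T ω) μ := by
    refine myIntegrableOfBounds μ (hSmeas.div hTmeas)
      (a := 0) (b := (∑ i, K i * (1 + Xmax i) ^ n) / (1 + Xmin j) ^ n) ?_ ?_
    · intro ω; exact div_nonneg (hSpos ω).le (hTpos ω).le
    · intro ω
      exact div_le_div₀ hs1nn (hShi ω) (pow_pos (hApos j) n) (hYlo ω j)
  -- the key inequality ∫ S/T ≤ 1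
  have hST : ∫ ω, S ω / T ω ∂μ ≤ 1 := by
    have hexp : ∀ ω, S ω / T ω
        = ∑ i, K i * ∏ k ∈ Finset.range n, ((1 + X k ω i) / (1 + X k ω j)) := by
      intro ω
      rw [hSdef, hTdef]
      simp only [Finset.sum_div, mul_div_assoc, Finset.prod_div_distrib]
    have hterm : ∀ i : Fin m,
        ∫ ω, ∏ k ∈ Finset.range n, ((1 + X k ω i) / (1 + X k ω j)) ∂μ ≤ 1 ∧
        Integrable (fun ω => ∏ k ∈ Finset.range n, ((1 + X k ω i) / (1 + X k ω j))) μ := by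
      intro i
      set g : (Fin m → ℝ) → ℝ := fun v => (1 + v i) / (1 + v j) with hgdef
      have hg : Measurable g :=
        (measurable_const.add (measurable_pi_apply i)).div
          (measurable_const.add (measurable_pi_apply j))
      have hf0 : ∀ k ω, (0:ℝ) ≤ (g ∘ X k) ω := fun k ω =>
        div_nonneg (hpos k ω i).le (hpos k ω j).le
      have hfC : ∀ k ω, (g ∘ X k) ω ≤ (1 + Xmax i) / (1 + Xmin j) := fun k ω =>
        div_le_div₀ (hBpos i).le (hle k ω i) (hApos j) (hge k ω j)
      have hfind : iIndepFun (fun k => g ∘ X k) μ :=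
        hindep.comp (fun _ => g) (fun _ => hg)
      have hprod := myIntegralProd μ (fun k => g ∘ X k) hfind
        (fun k => hg.comp (hmeas k)) ((1 + Xmax i) / (1 + Xmin j)) hf0 hfC n
      have hid : ∀ k, ∫ ω, (g ∘ X k) ω ∂μ = ∫ ω, (g ∘ X 0) ω ∂μ := fun k =>
        ((hident k).comp hg).integral_eq
      have hc0 : (0:ℝ) ≤ ∫ ω, (g ∘ X 0) ω ∂μ :=
        integral_nonneg fun ω => hf0 0 ω
      have hc1 : ∫ ω, (g ∘ X 0) ω ∂μ ≤ 1 := by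
        rcases eq_or_ne i j with rfl | hij
        · have : ∀ ω, (g ∘ X 0) ω = 1 := fun ω => div_self (hpos 0 ω i).ne'
          simp only [this]
          simp
        · exact hdom i hij
      constructor
      · have : (fun ω => ∏ k ∈ Finset.range n, ((1 + X k ω i) / (1 + X k ω j)))
            = fun ω => ∏ k ∈ Finset.range n, (g ∘ X k) ω := rfl
        rw [this, hprod]
        calc ∏ k ∈ Finset.range n, ∫ ω, (g ∘ X k) ω ∂μ
            = (∫ ω, (g ∘ X 0) ω ∂μ) ^ n := by
              rw [Finset.prod_congr rfl fun k _ => hid k]; simp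
          _ ≤ 1 := pow_le_one₀ hc0 hc1
      · refine myIntegrableOfBounds μ ?_ (a := 0)
          (b := ((1 + Xmax i) / (1 + Xmin j)) ^ n) ?_ ?_
        · exact Finset.measurable_prod _ fun k _ => hg.comp (hmeas k)
        · intro ω; exact Finset.prod_nonneg fun k _ => hf0 k ω
        · intro ω
          calc ∏ k ∈ Finset.range n, ((1 + X k ω i) / (1 + X k ω j))
              ≤ ∏ _k ∈ Finset.range n, ((1 + Xmax i) / (1 + Xmin j)) :=
                Finset.prod_le_prod (fun k _ => hf0 k ω) (fun k _ => hfC k ω)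
            _ = ((1 + Xmax i) / (1 + Xmin j)) ^ n := by rw [Finset.prod_const, Finset.card_range]
    calc ∫ ω, S ω / T ω ∂μ
        = ∫ ω, ∑ i, K i * ∏ k ∈ Finset.range n, ((1 + X k ω i) / (1 + X k ω j)) ∂μ := by
          simp only [hexp]
      _ = ∑ i, K i * ∫ ω, ∏ k ∈ Finset.range n, ((1 + X k ω i) / (1 + X k ω j)) ∂μ := by
          rw [integral_finset_sum _ fun i _ => ((hterm i).2.const_mul (K i))]
          exact Finset.sum_congr rfl fun i _ => integral_const_mul _ _
      _ ≤ ∑ i, K i * 1 :=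
          Finset.sum_le_sum fun i _ => mul_le_mul_of_nonneg_left (hterm i).1 (hK i)
      _ = 1 := by simp [hKsum]
  -- put it together
  have step1 : ∀ ω, Real.log (S ω) ≤ Real.log (T ω) + (S ω / T ω - 1) := by
    intro ω
    have h1 : Real.log (S ω / T ω) ≤ S ω / T ω - 1 :=
      Real.log_le_sub_one_of_pos (div_pos (hSpos ω) (hTpos ω))
    rw [Real.log_div (hSpos ω).ne' (hTpos ω).ne'] at h1
    linarith
  calc ∫ ω, Real.log (S ω) ∂μ
      ≤ ∫ ω, (Real.log (T ω) + (S ω / T ω - 1)) ∂μ :=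
        integral_mono hlogS (hlogT.add (hratio.sub (integrable_const 1))) step1
    _ = ∫ ω, Real.log (T ω) ∂μ + ((∫ ω, S ω / T ω ∂μ) - 1) := by
        have hsub : Integrable (fun ω => S ω / T ω - 1) μ := hratio.sub (integrable_const 1)
        rw [integral_add hlogT hsub, integral_sub hratio (integrable_const 1), integral_const]
        simp
    _ ≤ ∫ ω, Real.log (T ω) ∂μ := by linarith
end

section
/- (Asymptotic Relative Optimality.) Let m ≥ 2, and let X(0), X(1), X(2), ... be an infinite sequence of i.i.d. random vectors in ℝ^m with components bounded as X_min,i ≤ X_i(k) ≤ X_max,i, X_min,i > -1, X_max,i finite. For each n ≥ 1 define 𝒳_{n,i} := ∏_{k=0}^{n-1} (1 + X_i(k)) - 1 and g_n(K) := (1/n) E[log(1 + K^T 𝒳_n)]. Let K, K* lie in the unit simplex 𝒦 = {K ∈ ℝ^m : K_i ≥ 0 for all i, ∑_{i=1}^m K_i = 1}, and suppose that for every n ≥ 1, E[(1 + K^T 𝒳_n) / (1 + K*^T 𝒳_n)] ≤ 1 (which holds when K* maximizes g_n over 𝒦 for every n). Then limsup_{n→∞} (1/n) log((1 + K^T 𝒳_n)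 / (1 + K*^T 𝒳_n)) ≤ 0 with probability one. -/
open MeasureTheory ProbabilityTheory Finset Filter

lemma simplex_sum_pos' {m : ℕ} (K p : Fin m → ℝ) (hK0 : ∀ i, 0 ≤ K i)
    (hK1 : ∑ i, K i = 1) (hp : ∀ i, 0 < p i) : 0 < ∑ i, K i * p i := by
  have h : ∃ i, 0 < K i := by
    by_contra h
    push_neg at h
    have hz : ∀ i, K i = 0 := fun i => le_antisymm (h i) (hK0 i)
    simp [hz] at hK1
  obtain ⟨i, hi⟩ := h
  exact Finset.sum_pos' (fun j _ => mul_nonneg (hK0 j) (hp j).le)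
    ⟨i, Finset.mem_univ i, mul_pos hi (hp i)⟩

/-- Asymptotic Relative Optimality: if for every `n ≥ 1` the expected ratio
`E[(1 + Kᵀ 𝒳ₙ)/(1 + K*ᵀ 𝒳ₙ)] ≤ 1` (as holds when `K*` is Kelly optimal for every `n`),
then `limsup (1/n) log((1 + Kᵀ 𝒳ₙ)/(1 + K*ᵀ 𝒳ₙ)) ≤ 0` with probability one. -/
theorem asymptotic_relative_optimality
    {Ω : Type*} [MeasurableSpace Ω] (μ : Measure Ω) [IsProbabilityMeasure μ]
    (m : ℕ) (hm : 2 ≤ m)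
    (X : ℕ → Ω → Fin m → ℝ) (hmeas : ∀ k, Measurable (X k))
    (hindep : iIndepFun X μ)
    (hident : ∀ k, IdentDistrib (X k) (X 0) μ μ)
    (Xmin Xmax : Fin m → ℝ)
    (hXmin : ∀ i, -1 < Xmin i)
    (hbd : ∀ k (ω : Ω) (i : Fin m), Xmin i ≤ X k ω i ∧ X k ω i ≤ Xmax i)
    (K Kstar : Fin m → ℝ)
    (hK0 : ∀ i, 0 ≤ K i) (hK1 : ∑ i, K i = 1)
    (hKstar0 : ∀ i, 0 ≤ Kstar i) (hKstar1 : ∑ i, Kstar i = 1)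
    (hratio : ∀ n : ℕ, 1 ≤ n →
      ∫ ω, (1 + ∑ i, K i * ((∏ k ∈ Finset.range n, (1 + X k ω i)) - 1)) /
            (1 + ∑ i, Kstar i * ((∏ k ∈ Finset.range n, (1 + X k ω i)) - 1)) ∂μ ≤ 1) :
    ∀ᵐ ω ∂μ, Filter.limsup
      (fun n : ℕ => (1 / (n : ℝ)) * Real.log
        ((1 + ∑ i, K i * ((∏ k ∈ Finset.range n, (1 + X k ω i)) - 1)) /
          (1 + ∑ i, Kstar i * ((∏ k ∈ Finset.range n, (1 + X k ω i)) - 1)))) atTop ≤ 0 := by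
  haveI : Nonempty (Fin m) := ⟨⟨0, by omega⟩⟩
  haveI : Nonempty Ω := by
    by_contra h
    rw [not_nonempty_iff] at h
    have h1 : μ Set.univ = 1 := measure_univ
    rw [Set.univ_eq_empty_iff.mpr h] at h1
    simp at h1
  obtain ⟨ω₀⟩ := (inferInstance : Nonempty Ω)
  -- basic positivity facts
  have ha : ∀ i, 0 < 1 + Xmin i := fun i => by linarith [hXmin i]
  have hab : ∀ i, Xmin i ≤ Xmax i := fun i =>
    le_trans (hbd 0 ω₀ i).1 (hbd 0 ω₀ i).2
  have hb : ∀ i, 0 < 1 + Xmax i := fun i => lt_of_lt_of_le (ha i) (by linarith [hab i])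
  have hfac : ∀ k (ω : Ω) i, 0 < 1 + X k ω i := fun k ω i =>
    lt_of_lt_of_le (ha i) (by linarith [(hbd k ω i).1])
  set P : ℕ → Ω → Fin m → ℝ := fun n ω i => ∏ k ∈ Finset.range n, (1 + X k ω i) with hP
  have hPpos : ∀ n (ω : Ω) i, 0 < P n ω i := fun n ω i =>
    Finset.prod_pos fun k _ => hfac k ω i
  have hPlow : ∀ n (ω : Ω) i, (1 + Xmin i) ^ n ≤ P n ω i := by
    intro n ω i
    have h0 : (1 + Xmin i) ^ n = ∏ _k ∈ Finset.range n, (1 + Xmin i) := by simp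
    rw [h0]
    simp only [hP]
    exact Finset.prod_le_prod (fun k _ => (ha i).le)
      (fun k _ => by linarith [(hbd k ω i).1])
  have hPhigh : ∀ n (ω : Ω) i, P n ω i ≤ (1 + Xmax i) ^ n := by
    intro n ω i
    calc P n ω i ≤ ∏ k ∈ Finset.range n, (1 + Xmax i) :=
          Finset.prod_le_prod (fun k _ => (hfac k ω i).le)
            (fun k _ => by linarith [(hbd k ω i).2])
      _ = (1 + Xmax i) ^ n := by simp
  -- rewrite 1 + ∑ L i * (P - 1) = ∑ L i * P
  have key : ∀ (L : Fin m → ℝ), (∑ i, L i = 1) → ∀ n (ω : Ω),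
      1 + ∑ i, L i * (P n ω i - 1) = ∑ i, L i * P n ω i := by
    intro L hL n ω
    simp only [mul_sub, mul_one, Finset.sum_sub_distrib, hL]
    ring
  set Z : ℕ → Ω → ℝ := fun n ω =>
    (∑ i, K i * P n ω i) / (∑ i, Kstar i * P n ω i) with hZ
  have hNumPos : ∀ n (ω : Ω), 0 < ∑ i, K i * P n ω i := fun n ω =>
    simplex_sum_pos' K _ hK0 hK1 (hPpos n ω)
  have hDenPos : ∀ n (ω : Ω), 0 < ∑ i, Kstar i * P n ω i := fun n ω =>
    simplex_sum_pos' Kstar _ hKstar0 hKstar1 (hPpos n ω)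
  have hZpos : ∀ n (ω : Ω), 0 < Z n ω := fun n ω =>
    div_pos (hNumPos n ω) (hDenPos n ω)
  -- global bounds via min/max
  set α : ℝ := Finset.univ.inf' Finset.univ_nonempty (fun i => 1 + Xmin i) with hα
  set β : ℝ := Finset.univ.sup' Finset.univ_nonempty (fun i => 1 + Xmax i) with hβ
  have hαpos : 0 < α := by
    obtain ⟨i, _, hi⟩ := Finset.exists_mem_eq_inf' Finset.univ_nonempty (fun i => 1 + Xmin i)
    rw [hα, hi]; exact ha i
  have hβpos : 0 < β := by
    obtain ⟨i, _, hi⟩ := Finset.exists_mem_eq_sup' Finset.univ_nonempty (fun i => 1 + Xmax i)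
    rw [hβ, hi]; exact hb i
  have hαle : ∀ i, α ≤ 1 + Xmin i := fun i => Finset.inf'_le _ (Finset.mem_univ i)
  have hβge : ∀ i, 1 + Xmax i ≤ β := fun i => by
    rw [hβ]; exact Finset.le_sup' (fun i => 1 + Xmax i) (Finset.mem_univ i)
  have hNumLow : ∀ (L : Fin m → ℝ), (∀ i, 0 ≤ L i) → (∑ i, L i = 1) →
      ∀ n (ω : Ω), α ^ n ≤ ∑ i, L i * P n ω i := by
    intro L hL0 hL1 n ω
    calc α ^ n = ∑ i, L i * α ^ n := by rw [← Finset.sum_mul, hL1, one_mul]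
      _ ≤ ∑ i, L i * P n ω i := by
          apply Finset.sum_le_sum
          intro i _
          apply mul_le_mul_of_nonneg_left _ (hL0 i)
          exact le_trans (pow_le_pow_left₀ hαpos.le (hαle i) n) (hPlow n ω i)
  have hNumHigh : ∀ (L : Fin m → ℝ), (∀ i, 0 ≤ L i) → (∑ i, L i = 1) →
      ∀ n (ω : Ω), ∑ i, L i * P n ω i ≤ β ^ n := by
    intro L hL0 hL1 n ω
    calc ∑ i, L i * P n ω i ≤ ∑ i, L i * β ^ n := by
          apply Finset.sum_le_sum
          intro i _
          apply mul_le_mul_of_nonneg_left _ (hL0 i)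
          exact le_trans (hPhigh n ω i) (pow_le_pow_left₀ (hb i).le (hβge i) n)
      _ = β ^ n := by rw [← Finset.sum_mul, hL1, one_mul]
  have hZhigh : ∀ n (ω : Ω), Z n ω ≤ β ^ n / α ^ n := fun n ω =>
    div_le_div₀ (pow_nonneg hβpos.le n) (hNumHigh K hK0 hK1 n ω)
      (pow_pos hαpos n) (hNumLow Kstar hKstar0 hKstar1 n ω)
  have hZlow : ∀ n (ω : Ω), α ^ n / β ^ n ≤ Z n ω := fun n ω =>
    div_le_div₀ (hNumPos n ω).le (hNumLow K hK0 hK1 n ω)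
      (hDenPos n ω) (hNumHigh Kstar hKstar0 hKstar1 n ω)
  -- measurability
  have hXm : ∀ k (i : Fin m), Measurable fun ω => X k ω i := fun k i =>
    (measurable_pi_apply i).comp (hmeas k)
  have hPm : ∀ n (i : Fin m), Measurable fun ω => P n ω i := fun n i =>
    Finset.measurable_prod _ (fun k _ => (measurable_const.add (hXm k i)))
  have hZm : ∀ n, Measurable (Z n) := fun n =>
    (Finset.measurable_sum _ fun i _ => measurable_const.mul (hPm n i)).div
      (Finset.measurable_sum _ fun i _ => measurable_const.mul (hPm n i))
  -- integrability
  have hZint : ∀ n, Integrable (Z n) μ := by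
    intro n
    apply Integrable.mono' (integrable_const (β ^ n / α ^ n))
      (hZm n).aestronglyMeasurable
    exact ae_of_all _ fun ω => by
      rw [Real.norm_eq_abs, abs_of_pos (hZpos n ω)]
      exact hZhigh n ω
  -- expectation bound : ∫ Z n ≤ 1
  have hEZ : ∀ n, ∫ ω, Z n ω ∂μ ≤ 1 := by
    intro n
    rcases Nat.eq_zero_or_pos n with hn | hn
    · subst hn
      simp only [hZ, hP]
      simp [hK1, hKstar1]
    · have := hratio n hn
      calc ∫ ω, Z n ω ∂μ
          = ∫ ω, (1 + ∑ i, K i * (P n ω i - 1)) / (1 + ∑ i, Kstar i * (P n ω i - 1)) ∂μ := by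
            apply integral_congr_ae
            exact ae_of_all _ fun ω => by rw [hZ]; simp only [key K hK1 n ω, key Kstar hKstar1 n ω]
        _ ≤ 1 := this
  -- Markov inequality for each ε > 0 and n
  have hMarkov : ∀ (ε : ℝ), 0 < ε → ∀ n : ℕ,
      μ {ω | Real.exp (ε * n) ≤ Z n ω} ≤ ENNReal.ofReal (Real.exp (-ε * n)) := by
    intro ε hε n
    have hexp : 0 < Real.exp (ε * n) := Real.exp_pos _
    have h1 := mul_meas_ge_le_integral_of_nonneg
      (ae_of_all μ fun ω => (hZpos n ω).le) (hZint n) (Real.exp (ε * n))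
    have h2 : (μ {ω | Real.exp (ε * n) ≤ Z n ω}).toReal ≤ Real.exp (-ε * n) := by
      have h3 : Real.exp (ε * n) * (μ {ω | Real.exp (ε * n) ≤ Z n ω}).toReal ≤ 1 :=
        h1.trans (hEZ n)
      rw [neg_mul, Real.exp_neg, inv_eq_one_div, le_div_iff₀ hexp]
      linarith [h3]
    calc μ {ω | Real.exp (ε * n) ≤ Z n ω}
        = ENNReal.ofReal (μ {ω | Real.exp (ε * n) ≤ Z n ω}).toReal :=
          (ENNReal.ofReal_toReal (measure_ne_top μ _)).symm
      _ ≤ ENNReal.ofReal (Real.exp (-ε * n)) := ENNReal.ofReal_le_ofReal h2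
  -- Borel–Cantelli
  have hBC : ∀ (ε : ℝ), 0 < ε → ∀ᵐ ω ∂μ, ∀ᶠ n : ℕ in atTop, Z n ω < Real.exp (ε * n) := by
    intro ε hε
    have hsum : (∑' n : ℕ, μ {ω | Real.exp (ε * n) ≤ Z n ω}) ≠ ⊤ := by
      have h1 : (∑' n : ℕ, μ {ω | Real.exp (ε * n) ≤ Z n ω})
          ≤ ∑' n : ℕ, (ENNReal.ofReal (Real.exp (-ε))) ^ n := by
        apply ENNReal.tsum_le_tsum
        intro n
        refine (hMarkov ε hε n).trans_eq ?_
        have he : Real.exp (-ε * n) = Real.exp (-ε) ^ n := by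
          rw [← Real.exp_nat_mul]; ring_nf
        rw [he, ENNReal.ofReal_pow (Real.exp_pos _).le]
      refine ne_top_of_le_ne_top ?_ h1
      rw [ENNReal.tsum_geometric, Ne, ENNReal.inv_eq_top]
      have hr : ENNReal.ofReal (Real.exp (-ε)) < 1 := by
        rw [← ENNReal.ofReal_one]
        exact ENNReal.ofReal_lt_ofReal_iff_of_nonneg (Real.exp_pos _).le |>.mpr
          (by rw [Real.exp_lt_one_iff]; linarith)
      exact (tsub_pos_of_lt hr).ne'
    filter_upwards [ae_eventually_notMem hsum] with ω hω
    filter_upwards [hω] with n hn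
    exact lt_of_not_ge hn
  have hmain : ∀ᵐ ω ∂μ, ∀ j : ℕ, ∀ᶠ n : ℕ in atTop,
      Z n ω < Real.exp ((1 / ((j : ℝ) + 1)) * n) := by
    rw [ae_all_iff]
    intro j
    exact hBC (1 / ((j : ℝ) + 1)) (by positivity)
  filter_upwards [hmain] with ω hω
  have hrw : (fun n : ℕ => (1 / (n : ℝ)) * Real.log
        ((1 + ∑ i, K i * ((∏ k ∈ Finset.range n, (1 + X k ω i)) - 1)) /
          (1 + ∑ i, Kstar i * ((∏ k ∈ Finset.range n, (1 + X k ω i)) - 1))))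
      = fun n : ℕ => (1 / (n : ℝ)) * Real.log (Z n ω) := by
    funext n
    rw [hZ]
    have h1 := key K hK1 n ω
    have h2 := key Kstar hKstar1 n ω
    simp only [hP] at h1 h2
    rw [h1, h2]
  rw [hrw]
  set u : ℕ → ℝ := fun n => (1 / (n : ℝ)) * Real.log (Z n ω) with hu
  have hcb : IsCoboundedUnder (· ≤ ·) atTop u := by
    apply isCoboundedUnder_le_of_eventually_le atTop (x := Real.log (α / β))
    filter_upwards [eventually_ge_atTop 1] with n hn
    have hn0 : (0 : ℝ) < n := by exact_mod_cast hn
    have hpow : (α / β) ^ n ≤ Z n ω := by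
      rw [div_pow]; exact hZlow n ω
    have hlog : Real.log ((α / β) ^ n) ≤ Real.log (Z n ω) :=
      Real.log_le_log (pow_pos (div_pos hαpos hβpos) n) hpow
    rw [Real.log_pow] at hlog
    have : (1 / (n : ℝ)) * ((n : ℝ) * Real.log (α / β)) ≤ u n :=
      mul_le_mul_of_nonneg_left hlog (by positivity)
    calc Real.log (α / β) = (1 / (n : ℝ)) * ((n : ℝ) * Real.log (α / β)) := by
          field_simp
      _ ≤ u n := this
  have hL : ∀ j : ℕ, Filter.limsup u atTop ≤ 1 / ((j : ℝ) + 1) := by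
    intro j
    apply Filter.limsup_le_of_le hcb
    filter_upwards [hω j, eventually_ge_atTop 1] with n hn hn1
    have hn0 : (0 : ℝ) < n := by exact_mod_cast hn1
    have hlog : Real.log (Z n ω) < (1 / ((j : ℝ) + 1)) * n := by
      have := Real.log_lt_log (hZpos n ω) hn
      rwa [Real.log_exp] at this
    have h2 : u n ≤ (1 / (n : ℝ)) * ((1 / ((j : ℝ) + 1)) * n) :=
      mul_le_mul_of_nonneg_left hlog.le (by positivity)
    calc u n ≤ (1 / (n : ℝ)) * ((1 / ((j : ℝ) + 1)) * n) := h2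
      _ = 1 / ((j : ℝ) + 1) := by field_simp
  by_contra hpos
  push_neg at hpos
  obtain ⟨j, hj⟩ := exists_nat_one_div_lt hpos
  exact absurd (hL j) (not_le.mpr hj)
end

section
/- Let m ≥ 2, and let X(0), X(1), X(2), ... be an infinite sequence of i.i.d. random vectors in ℝ^m with components bounded as X_min,i ≤ X_i(k) ≤ X_max,i, X_min,i > -1, X_max,i finite. For each n ≥ 1 define 𝒳_{n,i} := ∏_{k=0}^{n-1} (1 + X_i(k)) - 1, and for K in the unit simplex 𝒦 and initial account value V(0) > 0 define the account value V(n) = (1 + K^T 𝒳_n) V(0) and V*(n) = (1 + K*^T 𝒳_n) V(0). If for every n ≥ 1, E[(1 + K^T 𝒳_n) / (1 + K*^T 𝒳_n)] ≤ 1, then limsup_{n→∞} (1/n) log(V(n)/V*(n)) ≤ 0 with probability one. -/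
/-!
Write `R n = V(n)/V*(n)`. Since `E[R n] ≤ 1`, Markov's inequality gives
`P(R n ≥ e^{εn}) ≤ e^{-εn}`, which is summable in `n`, so by Borel–Cantelli almost surely
`R n < e^{εn}` eventually, simultaneously for all `ε = 1/(k+1)`. Hence
`limsup (1/n) log R n ≤ ε` for every `ε > 0`. The bounds on the returns keep `R n` between
`(c/d)^n` and `(d/c)^n`; this makes `R n` integrable and `(1/n) log R n` bounded below, so that
the real `limsup` is not a junk value.
-/

open MeasureTheory ProbabilityTheory Finset Filter Real

theorem Finite.exists_pos_forall_le {ι : Type*} [Finite ι] {f : ι → ℝ} (hf : ∀ i, 0 < f i) :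
    ∃ c, 0 < c ∧ ∀ i, c ≤ f i := by
  obtain ⟨⟨c, hc⟩, h⟩ := Finite.exists_ge fun i => (⟨f i, hf i⟩ : Set.Ioi (0 : ℝ))
  exact ⟨c, hc, h⟩

theorem Finset.prod_mem_Icc_pow_card {ι : Type*} {s : Finset ι} {f : ι → ℝ} {c d : ℝ}
    (hc : 0 ≤ c) (hf : ∀ i ∈ s, f i ∈ Set.Icc c d) :
    ∏ i ∈ s, f i ∈ Set.Icc (c ^ #s) (d ^ #s) := by
  rw [← prod_const, ← prod_const]
  exact ⟨prod_le_prod (fun _ _ => hc) fun i hi => (hf i hi).1,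
    prod_le_prod (fun i hi => hc.trans (hf i hi).1) fun i hi => (hf i hi).2⟩

theorem limsup_one_div_mul_log_le_zero {r : ℕ → ℝ} {a : ℝ} (ha : 0 < a)
    (hlow : ∀ n, a ^ n ≤ r n) (hsub : ∀ ε > 0, ∀ᶠ n in atTop, r n < exp (ε * n)) :
    limsup (fun n : ℕ => 1 / (n : ℝ) * log (r n)) atTop ≤ 0 := by
  have hcobdd : IsCoboundedUnder (· ≤ ·) atTop fun n : ℕ => 1 / (n : ℝ) * log (r n) := by
    refine isCoboundedUnder_le_of_eventually_le atTop (x := log a) ?_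
    filter_upwards [eventually_ge_atTop 1] with n hn
    have hn : (0 : ℝ) < n := by exact_mod_cast hn
    rw [one_div_mul_eq_div, le_div_iff₀ hn, mul_comm, ← log_pow]
    exact log_le_log (pow_pos ha n) (hlow n)
  refine le_of_forall_pos_le_add fun ε hε => limsup_le_of_le hcobdd ?_
  filter_upwards [hsub ε hε, eventually_ge_atTop 1] with n hlt hn
  have hn : (0 : ℝ) < n := by exact_mod_cast hn
  rw [zero_add, one_div_mul_eq_div, div_le_iff₀ hn]
  exact ((log_lt_log (pow_pos ha n |>.trans_le (hlow n)) hlt).trans_eq (log_exp _)).le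

section Markov

variable {Ω : Type*} [MeasurableSpace Ω] {μ : Measure Ω} [IsFiniteMeasure μ]

theorem measure_exp_le_le_ofReal_exp_neg {f : Ω → ℝ} (hf0 : 0 ≤ᵐ[μ] f) (hfi : Integrable f μ)
    (hf1 : ∫ ω, f ω ∂μ ≤ 1) (t : ℝ) :
    μ {ω | exp t ≤ f ω} ≤ ENNReal.ofReal (exp (-t)) := by
  rw [ENNReal.le_ofReal_iff_toReal_le (measure_ne_top μ _) (exp_nonneg _), exp_neg,
    ← one_div, le_div_iff₀ (exp_pos t), mul_comm]
  exact (mul_meas_ge_le_integral_of_nonneg hf0 hfi _).trans hf1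

theorem ae_eventually_lt_exp_mul {R : ℕ → Ω → ℝ} (h0 : ∀ n, 0 ≤ᵐ[μ] R n)
    (hint : ∀ n, Integrable (R n) μ) (hle : ∀ n, ∫ ω, R n ω ∂μ ≤ 1) {ε : ℝ} (hε : 0 < ε) :
    ∀ᵐ ω ∂μ, ∀ᶠ n in atTop, R n ω < exp (ε * n) := by
  have hsum : ∑' n : ℕ, μ {ω | exp (ε * n) ≤ R n ω} ≠ ⊤ := by
    refine ne_top_of_le_ne_top (b := ∑' n : ℕ, ENNReal.ofReal (exp (-ε)) ^ n)
      (tsum_geometric_lt_top.2 ?_).ne (ENNReal.tsum_le_tsum fun n => ?_)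
    · exact ENNReal.ofReal_lt_one.2 (exp_lt_one_iff.2 (neg_neg_of_pos hε))
    · refine (measure_exp_le_le_ofReal_exp_neg (h0 n) (hint n) (hle n) _).trans_eq ?_
      rw [← ENNReal.ofReal_pow (exp_nonneg _), ← exp_nat_mul, mul_neg, mul_comm]
  filter_upwards [ae_eventually_notMem hsum] with ω hω
  simpa only [Set.mem_ofPred_eq, not_le] using hω

theorem ae_forall_eventually_lt_exp_mul {R : ℕ → Ω → ℝ} (h0 : ∀ n, 0 ≤ᵐ[μ] R n)
    (hint : ∀ n, Integrable (R n) μ) (hle : ∀ n, ∫ ω, R n ω ∂μ ≤ 1) :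
    ∀ᵐ ω ∂μ, ∀ ε > 0, ∀ᶠ n in atTop, R n ω < exp (ε * n) := by
  have hk : ∀ᵐ ω ∂μ, ∀ k : ℕ, ∀ᶠ n in atTop, R n ω < exp (1 / (k + 1) * n) :=
    ae_all_iff.2 fun k => ae_eventually_lt_exp_mul h0 hint hle (by positivity)
  filter_upwards [hk] with ω hω ε hε
  obtain ⟨k, hk⟩ := exists_nat_one_div_lt hε
  filter_upwards [hω k] with n hn
  exact hn.trans_le (exp_le_exp.2 (by gcongr))

end Markov

section WealthRelative

variable {ι Ω : Type*} [Fintype ι]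

-- `V(n) / V(0) = 1 + Kᵀ 𝒳ₙ` for the portfolio `K` and per-step returns `X k ω : ι → ℝ`.
def wealthRelative (K : ι → ℝ) (X : ℕ → Ω → ι → ℝ) (n : ℕ) (ω : Ω) : ℝ :=
  1 + ∑ i, K i * ((∏ k ∈ range n, (1 + X k ω i)) - 1)

variable {K : ι → ℝ} {X : ℕ → Ω → ι → ℝ}

theorem wealthRelative_eq_sum (hK1 : ∑ i, K i = 1) (n : ℕ) (ω : Ω) :
    wealthRelative K X n ω = ∑ i, K i * ∏ k ∈ range n, (1 + X k ω i) := by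
  simp only [wealthRelative, mul_sub, mul_one, sum_sub_distrib, hK1, add_sub_cancel]

theorem wealthRelative_mem_Icc (hK0 : ∀ i, 0 ≤ K i) (hK1 : ∑ i, K i = 1) {c d : ℝ}
    (hc : 0 ≤ c) (hX : ∀ k ω i, 1 + X k ω i ∈ Set.Icc c d) (n : ℕ) (ω : Ω) :
    wealthRelative K X n ω ∈ Set.Icc (c ^ n) (d ^ n) := by
  rw [wealthRelative_eq_sum hK1]
  refine (convex_Icc _ _).sum_mem (fun i _ => hK0 i) hK1 fun i _ => ?_
  simpa using prod_mem_Icc_pow_card (s := range n) hc fun k _ => hX k ω i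

theorem wealthRelative_div_mem_Icc {K' : ι → ℝ} (hK0 : ∀ i, 0 ≤ K i) (hK1 : ∑ i, K i = 1)
    (hK'0 : ∀ i, 0 ≤ K' i) (hK'1 : ∑ i, K' i = 1) {c d : ℝ} (hc : 0 < c)
    (hX : ∀ k ω i, 1 + X k ω i ∈ Set.Icc c d) (n : ℕ) (ω : Ω) :
    wealthRelative K X n ω / wealthRelative K' X n ω ∈ Set.Icc ((c / d) ^ n) ((d / c) ^ n) := by
  obtain ⟨hlo, hhi⟩ := wealthRelative_mem_Icc hK0 hK1 hc.le hX n ω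
  obtain ⟨hlo', hhi'⟩ := wealthRelative_mem_Icc hK'0 hK'1 hc.le hX n ω
  have hcn : 0 < c ^ n := pow_pos hc n
  rw [div_pow, div_pow]
  exact ⟨div_le_div₀ (hcn.trans_le hlo).le hlo (hcn.trans_le hlo') hhi',
    div_le_div₀ (hcn.trans_le (hlo.trans hhi)).le hhi hcn hlo'⟩

theorem measurable_wealthRelative [MeasurableSpace Ω] (hX : ∀ k, Measurable (X k)) (n : ℕ) :
    Measurable (wealthRelative K X n) := by
  unfold wealthRelative
  fun_prop

theorem integrable_wealthRelative_div [MeasurableSpace Ω] {μ : Measure Ω} [IsFiniteMeasure μ]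
    {K' : ι → ℝ} (hX : ∀ k, Measurable (X k)) {a b : ℝ} {n : ℕ} (ha : 0 ≤ a)
    (hR : ∀ ω, wealthRelative K X n ω / wealthRelative K' X n ω ∈ Set.Icc a b) :
    Integrable (fun ω => wealthRelative K X n ω / wealthRelative K' X n ω) μ :=
  .of_bound
    ((measurable_wealthRelative hX n).div (measurable_wealthRelative hX n)).aestronglyMeasurable b
    (ae_of_all _ fun ω => by rw [Real.norm_of_nonneg (ha.trans (hR ω).1)]; exact (hR ω).2)

end WealthRelative

theorem asymptotic_relative_optimality_account_value_general
    {Ω : Type*} [MeasurableSpace Ω] (μ : Measure Ω) [IsProbabilityMeasure μ]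
    (m : ℕ)
    (X : ℕ → Ω → Fin m → ℝ) (hmeas : ∀ k, Measurable (X k))
    (Xmin Xmax : Fin m → ℝ)
    (hXmin : ∀ i, -1 < Xmin i)
    (hbd : ∀ k (ω : Ω) (i : Fin m), Xmin i ≤ X k ω i ∧ X k ω i ≤ Xmax i)
    (K Kstar : Fin m → ℝ)
    (hK0 : ∀ i, 0 ≤ K i) (hK1 : ∑ i, K i = 1)
    (hKstar0 : ∀ i, 0 ≤ Kstar i) (hKstar1 : ∑ i, Kstar i = 1)
    (V0 : ℝ) (hV0 : 0 < V0)
    (V Vstar : ℕ → Ω → ℝ)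
    (hV : ∀ n ω, V n ω =
      (1 + ∑ i, K i * ((∏ k ∈ Finset.range n, (1 + X k ω i)) - 1)) * V0)
    (hVstar : ∀ n ω, Vstar n ω =
      (1 + ∑ i, Kstar i * ((∏ k ∈ Finset.range n, (1 + X k ω i)) - 1)) * V0)
    (hratio : ∀ n : ℕ, 1 ≤ n →
      ∫ ω, (1 + ∑ i, K i * ((∏ k ∈ Finset.range n, (1 + X k ω i)) - 1)) /
            (1 + ∑ i, Kstar i * ((∏ k ∈ Finset.range n, (1 + X k ω i)) - 1)) ∂μ ≤ 1) :
    ∀ᵐ ω ∂μ, Filter.limsup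
      (fun n : ℕ => (1 / (n : ℝ)) * Real.log (V n ω / Vstar n ω)) atTop ≤ 0 := by
  obtain ⟨c, hc, hcXmin⟩ := Finite.exists_pos_forall_le fun i => neg_lt_iff_pos_add'.1 (hXmin i)
  obtain ⟨d, hdXmax⟩ := Finite.exists_le fun i => 1 + Xmax i
  have hX : ∀ k ω i, 1 + X k ω i ∈ Set.Icc c (max c d) := fun k ω i =>
    ⟨(hcXmin i).trans (by linarith [hbd k ω i]),
      le_max_of_le_right (le_trans (by linarith [hbd k ω i]) (hdXmax i))⟩
  set R := fun n ω => wealthRelative K X n ω / wealthRelative Kstar X n ω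
  have hR := wealthRelative_div_mem_Icc hK0 hK1 hKstar0 hKstar1 hc hX
  have hVR : ∀ n ω, V n ω / Vstar n ω = R n ω := fun n ω => by
    rw [hV, hVstar, mul_div_mul_right _ _ hV0.ne']
    rfl
  have hRpos : 0 < c / max c d := div_pos hc (hc.trans_le (le_max_left c d))
  have hR0 : ∀ n, 0 ≤ᵐ[μ] R n := fun n =>
    ae_of_all _ fun ω => (pow_pos hRpos n).le.trans (hR n ω).1
  have hRint : ∀ n, Integrable (R n) μ := fun n =>
    integrable_wealthRelative_div hmeas (pow_pos hRpos n).le (hR n)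
  have hRle : ∀ n, ∫ ω, R n ω ∂μ ≤ 1
    | 0 => by simp [R, wealthRelative]
    | n + 1 => hratio (n + 1) n.succ_pos
  filter_upwards [ae_forall_eventually_lt_exp_mul hR0 hRint hRle] with ω hω
  simp only [hVR]
  exact limsup_one_div_mul_log_le_zero hRpos (fun n => (hR n ω).1) hω

/-- Account-value form of asymptotic relative optimality: with `V(n) = (1 + Kᵀ 𝒳ₙ) V(0)`
and `V*(n) = (1 + K*ᵀ 𝒳ₙ) V(0)`, if `E[(1 + Kᵀ 𝒳ₙ)/(1 + K*ᵀ 𝒳ₙ)] ≤ 1` for every `n ≥ 1`,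
then `limsup (1/n) log(V(n)/V*(n)) ≤ 0` with probability one. -/
theorem asymptotic_relative_optimality_account_value
    {Ω : Type*} [MeasurableSpace Ω] (μ : Measure Ω) [IsProbabilityMeasure μ]
    (m : ℕ) (hm : 2 ≤ m)
    (X : ℕ → Ω → Fin m → ℝ) (hmeas : ∀ k, Measurable (X k))
    (hindep : iIndepFun X μ)
    (hident : ∀ k, IdentDistrib (X k) (X 0) μ μ)
    (Xmin Xmax : Fin m → ℝ)
    (hXmin : ∀ i, -1 < Xmin i)
    (hbd : ∀ k (ω : Ω) (i : Fin m), Xmin i ≤ X k ω i ∧ X k ω i ≤ Xmax i)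
    (K Kstar : Fin m → ℝ)
    (hK0 : ∀ i, 0 ≤ K i) (hK1 : ∑ i, K i = 1)
    (hKstar0 : ∀ i, 0 ≤ Kstar i) (hKstar1 : ∑ i, Kstar i = 1)
    (V0 : ℝ) (hV0 : 0 < V0)
    (V Vstar : ℕ → Ω → ℝ)
    (hV : ∀ n ω, V n ω =
      (1 + ∑ i, K i * ((∏ k ∈ Finset.range n, (1 + X k ω i)) - 1)) * V0)
    (hVstar : ∀ n ω, Vstar n ω =
      (1 + ∑ i, Kstar i * ((∏ k ∈ Finset.range n, (1 + X k ω i)) - 1)) * V0)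
    (hratio : ∀ n : ℕ, 1 ≤ n →
      ∫ ω, (1 + ∑ i, K i * ((∏ k ∈ Finset.range n, (1 + X k ω i)) - 1)) /
            (1 + ∑ i, Kstar i * ((∏ k ∈ Finset.range n, (1 + X k ω i)) - 1)) ∂μ ≤ 1) :
    ∀ᵐ ω ∂μ, Filter.limsup
      (fun n : ℕ => (1 / (n : ℝ)) * Real.log (V n ω / Vstar n ω)) atTop ≤ 0 :=
  asymptotic_relative_optimality_account_value_general μ m X hmeas Xmin Xmax hXmin hbd K Kstar hK0
    hK1 hKstar0 hKstar1 V0 hV0 V Vstar hV hVstar hratio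
end
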